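/- arXiv:1207.0569 — 9 statements merged into one kernel-verified Lean document; each statement's English description precedes it below -/
import Mathlib

section
/- Let L/K be a finite Galois extension of fields with Galois group G, and let V be an L-vector space equipped with a semi-linear action of G, i.e. g(v+w)=g(v)+g(w) and g(av)=g(a)g(v) for all a∈L, v,w∈V, g∈G. Then the natural L-linear map L ⊗_K V^G → V, a⊗v ↦ av, is an isomorphism (Speiser's lemma). -/
open scoped TensorProduct

/-! By Dedekind's independence of characters the vectors `(g b)_g`, `b ∈ L`, span `L^G` over `L`,
so there are `aᵢ, bᵢ ∈ L` with `∑ aᵢ g(bᵢ) = δ_{g,1}`. The operator `T v = ∑_g ρ_g v` takes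
values in `V^G` and satisfies `T (x w) = Tr(x) w` for invariant `w`, and `v ↦ ∑ aᵢ ⊗ T (bᵢ v)`
is inverse to `a ⊗ w ↦ a w`: both composites reduce to `∑ aᵢ g(bᵢ) = δ_{g,1}`, applied to
`ρ` on `V` and to the tautological action on `L`. -/

theorem span_range_algEquiv_apply_eq_top (K L : Type*) [CommSemiring K] [Field L] [Algebra K L]
    [Finite (L ≃ₐ[K] L)] :
    Submodule.span L (Set.range fun (x : L) (g : L ≃ₐ[K] L) => g x) = ⊤ := by
  classical
  cases nonempty_fintype (L ≃ₐ[K] L)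
  rw [← Submodule.dualAnnihilator_eq_bot_iff, eq_bot_iff]
  intro f hf
  have hsum : ∑ g, f (fun h => if g = h then 1 else 0) • (g : L →ₐ[K] L).toLinearMap = 0 := by
    refine LinearMap.ext fun x => ?_
    have := (Submodule.mem_dualAnnihilator f).1 hf _ (Submodule.subset_span ⟨x, rfl⟩)
    rw [LinearMap.pi_apply_eq_sum_univ] at this
    simpa [mul_comm] using this
  have hcoef := Fintype.linearIndependent_iff.1 ((linearIndependent_toLinearMap K L L).comp _
    (fun g h hgh => AlgEquiv.coe_toAlgHom_injective hgh)) _ hsum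
  refine (Submodule.mem_bot L).2 (LinearMap.ext fun x => ?_)
  simp [LinearMap.pi_apply_eq_sum_univ f x, hcoef]

theorem exists_sum_mul_algEquiv_apply_eq_one_and_eq_zero (K L : Type*) [CommSemiring K] [Field L]
    [Algebra K L] [Finite (L ≃ₐ[K] L)] :
    ∃ (n : ℕ) (a b : Fin n → L),
      ∑ i, a i * b i = 1 ∧ ∀ g : L ≃ₐ[K] L, g ≠ 1 → ∑ i, a i * g (b i) = 0 := by
  classical
  have hδ : (Pi.single 1 1 : (L ≃ₐ[K] L) → L) ∈
      Submodule.span L (Set.range fun (x : L) (g : L ≃ₐ[K] L) => g x) := by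
    simp [span_range_algEquiv_apply_eq_top]
  obtain ⟨n, a, b, hab⟩ := Submodule.mem_span_set'.1 hδ
  choose b' hb' using fun i => (b i).2
  have hab' (g : L ≃ₐ[K] L) : ∑ i, a i * g (b' i) = (Pi.single 1 1 : (L ≃ₐ[K] L) → L) g := by
    simpa [← hb'] using congrFun hab g
  exact ⟨n, a, b', by simpa using hab' 1, fun g hg => by simpa [hg] using hab' g⟩

theorem Submodule.liftBaseChange_subtype_bijective {K L V : Type*} [CommSemiring K]
    [CommSemiring L] [Algebra K L] [AddCommMonoid V] [Module K V] [Module L V]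
    [IsScalarTower K L V] (W : Submodule K V) (T : V →+ W) (τ : L → K)
    (hT : ∀ (x : L) (w : W), T (x • (w : V)) = τ x • w)
    {n : ℕ} (a b : Fin n → L) (hV : ∀ v, ∑ i, a i • (T (b i • v) : V) = v)
    (hL : ∀ x, ∑ i, τ (b i * x) • a i = x) :
    Function.Bijective (W.subtype.liftBaseChange L) := by
  let Ψ : V →+ L ⊗[K] W := ∑ i, (TensorProduct.mk K L W (a i)).toAddMonoidHom.comp
    (T.comp (DistribSMul.toAddMonoidHom V (b i)))
  have hΨ : ∀ v, Ψ v = ∑ i, a i ⊗ₜ T (b i • v) := by simp [Ψ]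
  refine Function.bijective_iff_has_inverse.2 ⟨Ψ, fun x => ?_, fun v => by simp [hΨ, hV]⟩
  induction x using TensorProduct.induction_on with
  | zero => simp
  | add x y hx hy => rw [map_add, map_add, hx, hy]
  | tmul x w =>
    simp only [LinearMap.liftBaseChange_tmul, hΨ, Submodule.subtype_apply, smul_smul, hT,
      ← TensorProduct.smul_tmul, ← TensorProduct.sum_tmul, hL]

theorem apply_sum_univ_apply_eq {G V : Type*} [Group G] [Fintype G] [AddCommMonoid V]
    (ρ : G → V →+ V) (hmul : ∀ g h v, ρ (g * h) v = ρ g (ρ h v))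
    (h : G) (v : V) : ρ h (∑ g, ρ g v) = ∑ g, ρ g v := by
  rw [map_sum]
  simp_rw [← hmul]
  exact Fintype.sum_equiv (Equiv.mulLeft h) _ _ fun _ => rfl

theorem sum_smul_sum_apply_smul_eq {K L V : Type*} [CommSemiring K] [CommSemiring L] [Algebra K L]
    [Fintype (L ≃ₐ[K] L)] [AddCommMonoid V] [Module L V] (ρ : (L ≃ₐ[K] L) → V → V)
    (hone : ∀ v, ρ 1 v = v) (hsmul : ∀ g (a : L) v, ρ g (a • v) = g a • ρ g v)
    {n : ℕ} {a b : Fin n → L} (hab₁ : ∑ i, a i * b i = 1)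
    (hab : ∀ g : L ≃ₐ[K] L, g ≠ 1 → ∑ i, a i * g (b i) = 0) (v : V) :
    ∑ i, a i • ∑ g, ρ g (b i • v) = v := by
  calc ∑ i, a i • ∑ g, ρ g (b i • v) = ∑ g, (∑ i, a i * g (b i)) • ρ g v := by
        simp only [hsmul, Finset.smul_sum, smul_smul, Finset.sum_smul]
        exact Finset.sum_comm
    _ = v := by
        rw [Finset.sum_eq_single 1 (fun g _ hg => by rw [hab g hg, zero_smul]) (by simp)]
        simpa [hab₁] using hone v

theorem sum_apply_smul_eq_trace_smul {K L V : Type*} [Field K] [Field L] [Algebra K L]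
    [FiniteDimensional K L] [IsGalois K L] [AddCommMonoid V] [Module K V] [Module L V]
    [IsScalarTower K L V] (ρ : (L ≃ₐ[K] L) → V → V)
    (hsmul : ∀ g (a : L) v, ρ g (a • v) = g a • ρ g v) {w : V} (hw : ∀ g, ρ g w = w) (x : L) :
    ∑ g, ρ g (x • w) = Algebra.trace K L x • w := by
  simp only [hsmul, hw, ← Finset.sum_smul, ← trace_eq_sum_automorphisms, algebraMap_smul]

/-- **Speiser's lemma.** Let `L/K` be a finite Galois extension of fields with Galois
group `G = L ≃ₐ[K] L`, and let `V` be an `L`-vector space equipped with a semi-linear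
action `ρ` of `G` (additive and satisfying `ρ g (a • v) = g a • ρ g v`).  Then the
natural `L`-linear map `L ⊗[K] V^G → V`, `a ⊗ v ↦ a • v`, is an isomorphism. -/
theorem speiser_lemma
    (K L : Type*) [Field K] [Field L] [Algebra K L]
    [FiniteDimensional K L] [IsGalois K L]
    (V : Type*) [AddCommGroup V] [Module K V] [Module L V] [IsScalarTower K L V]
    (ρ : (L ≃ₐ[K] L) → V → V)
    (hone : ∀ v, ρ 1 v = v)
    (hmul : ∀ g h v, ρ (g * h) v = ρ g (ρ h v))
    (hadd : ∀ g v w, ρ g (v + w) = ρ g v + ρ g w)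
    (hsmul : ∀ g (a : L) v, ρ g (a • v) = g a • ρ g v)
    (VG : Submodule K V)
    (hVG : ∀ v, v ∈ VG ↔ ∀ g, ρ g v = v) :
    Function.Bijective (VG.subtype.liftBaseChange L) := by
  obtain ⟨n, a, b, hab₁, hab⟩ := exists_sum_mul_algEquiv_apply_eq_one_and_eq_zero K L
  let ρ' g : V →+ V := AddMonoidHom.mk' (ρ g) (hadd g)
  let T : V →+ VG := (∑ g, ρ' g).codRestrict VG fun v =>
    (hVG _).2 fun h => by
      rw [AddMonoidHom.finsetSum_apply]
      exact apply_sum_univ_apply_eq ρ' hmul h v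
  refine VG.liftBaseChange_subtype_bijective T (Algebra.trace K L) (fun x w => ?_) a b
    (fun v => ?_) (fun x => ?_)
  · exact Subtype.ext <| by
      simpa [T, ρ'] using sum_apply_smul_eq_trace_smul ρ hsmul ((hVG w).1 w.2) x
  · simpa [T, ρ'] using sum_smul_sum_apply_smul_eq ρ hone hsmul hab₁ hab v
  · have := sum_smul_sum_apply_smul_eq (fun g : L ≃ₐ[K] L => (g : L → L)) (fun _ => rfl)
      (fun g => map_mul g) hab₁ hab x
    simpa [trace_eq_sum_automorphisms, Algebra.smul_def, mul_comm] using this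
end

section
/- Let M be a semi-linear O_L[G]-module. Then the cokernel of the natural morphism φ: O_L ⊗_{O_K} M^G → M is killed by the different ideal 𝔇_{L/K}: for every d ∈ 𝔇_{L/K} and every x ∈ M, the element dx lies in the O_L-submodule of M generated by M^G. -/
/-!
Pick an `A`-basis `bᵢ` of `B` and let `bᵢ^∨` be its trace-dual basis of `L/K`. The `bᵢ^∨` span
the inverse different, so `βᵢ := d bᵢ^∨` lie in `B`. Since `Tr(bᵢ bⱼ^∨) = δᵢⱼ`, Dedekind's
independence of characters gives `∑ᵢ σ(bᵢ) bᵢ^∨ = δ_{σ,1}`, hence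
`d x = ∑ᵢ βᵢ ∑_σ σ(bᵢ x)`, a `B`-combination of the invariant traces `∑_σ σ(bᵢ x)`.
-/

open Finset nonZeroDivisors

theorem Module.Basis.sum_algEquiv_apply_mul_traceDual {K L : Type*} [Field K] [Field L]
    [Algebra K L] [FiniteDimensional K L] [IsGalois K L] [DecidableEq Gal(L/K)]
    {ι : Type*} [Fintype ι] [DecidableEq ι] (c : Module.Basis ι K L) (σ : Gal(L/K)) :
    ∑ i, σ (c i) * c.traceDual i = if σ = 1 then 1 else 0 := by
  have hexpand (z : L) : ∑ τ : Gal(L/K), (∑ i, τ (c i) * c.traceDual i) * τ z = z :=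
    calc ∑ τ : Gal(L/K), (∑ i, τ (c i) * c.traceDual i) * τ z
        = ∑ i, algebraMap K L (Algebra.trace K L (z * c i)) * c.traceDual i := by
          simp only [trace_eq_sum_automorphisms, sum_mul, map_mul]
          rw [sum_comm]
          exact sum_congr rfl fun i _ => sum_congr rfl fun τ _ => by ring
      _ = ∑ i, c.traceDual.repr z i • c.traceDual i := by simp [Algebra.smul_def]
      _ = z := c.traceDual.sum_repr z
  have hli := (linearIndependent_toLinearMap K L L).comp _ AlgEquiv.coe_toAlgHom_injective
  refine sub_eq_zero.mp (Fintype.linearIndependent_iff.mp hli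
    (fun τ => ∑ i, τ (c i) * c.traceDual i - if τ = 1 then 1 else 0) ?_ σ)
  ext z
  simp [sub_mul, sum_sub_distrib, hexpand]

section Different

variable (A K L B : Type*) [CommRing A] [CommRing B] [Field K] [Field L]
  [Algebra A K] [IsFractionRing A K] [Algebra K L] [FiniteDimensional K L]
  [Algebra A B] [Algebra B L] [Algebra A L] [IsScalarTower A B L] [IsScalarTower A K L]
  [IsIntegralClosure B A L]

variable {A K L B} in
theorem algebraMap_mul_mem_one_of_mem_differentIdeal [IsDomain A] [IsIntegrallyClosed A]
    [Algebra.IsSeparable K L] [IsDedekindDomain B] [Module.IsTorsionFree A B]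
    {d : B} (hd : d ∈ differentIdeal A B)
    {x : L} (hx : x ∈ Submodule.traceDual A K (1 : Submodule B L)) :
    algebraMap B L d * x ∈ (1 : Submodule B L) := by
  have := IsIntegralClosure.isFractionRing_of_finite_extension A K L B
  have hdual : algebraMap B L d ∈ 1 / Submodule.traceDual A K (1 : Submodule B L) := by
    rw [← coeSubmodule_differentIdeal A K]
    exact Submodule.mem_map_of_mem hd
  exact Submodule.mem_div_iff_forall_mul_mem.mp hdual x hx

theorem exists_sum_mul_galRestrict_eq_ite [IsDomain A] [IsPrincipalIdealRing A]
    [IsIntegrallyClosed A] [IsGalois K L] [IsDedekindDomain B] [Module.IsTorsionFree A B]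
    [DecidableEq Gal(L/K)] {d : B} (hd : d ∈ differentIdeal A B) :
    ∃ (n : ℕ) (b β : Fin n → B), ∀ σ : Gal(L/K),
      ∑ i, β i * galRestrict A K L B σ (b i) = if σ = 1 then d else 0 := by
  have : Module.IsTorsionFree A L := .trans_faithfulSMul A K L
  have := IsIntegralClosure.isLocalization A K L B
  have : Module.Free A B := IsIntegralClosure.module_free A K L B
  have : Module.Finite A B := IsIntegralClosure.finite A K L B
  let b := Module.finBasis A B
  let c := b.localizationLocalization K A⁰ L
  have hspan := Submodule.traceDual_span_of_basis A (1 : Submodule B L) c (by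
    rw [b.localizationLocalization_span K A⁰ L]
    ext; simp [Submodule.mem_one])
  have hβ (i) : ∃ β : B, algebraMap B L β = algebraMap B L d * c.traceDual i :=
    Submodule.mem_one.mp <| algebraMap_mul_mem_one_of_mem_differentIdeal hd <|
      (Submodule.restrictScalars_mem A _ _).mp <|
        hspan ▸ Submodule.subset_span (Set.mem_range_self i)
  choose β hβ using hβ
  refine ⟨_, b, β, fun σ => IsIntegralClosure.algebraMap_injective B A L ?_⟩
  calc algebraMap B L (∑ i, β i * galRestrict A K L B σ (b i))
      = algebraMap B L d * ∑ i, σ (c i) * c.traceDual i := by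
        have hc (i) : c i = algebraMap B L (b i) := b.localizationLocalization_apply K A⁰ L i
        simp only [map_sum, map_mul, hβ, algebraMap_galRestrict_apply, mul_sum, hc]
        exact sum_congr rfl fun i _ => by ring
    _ = algebraMap B L (if σ = 1 then d else 0) := by
        rw [c.sum_algEquiv_apply_mul_traceDual]
        split_ifs <;> simp

end Different

section Descent

variable {G B M : Type*} [Group G] [Fintype G] [Semiring B] [AddCommMonoid M] [Module B M]
  (ρ : G → M →+ M)

theorem apply_sum_apply_eq_sum_apply (hmul : ∀ g h x, ρ (g * h) x = ρ g (ρ h x))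
    (g : G) (y : M) :
    ρ g (∑ σ, ρ σ y) = ∑ σ, ρ σ y := by
  simp only [map_sum, ← hmul]
  exact Fintype.sum_equiv (Equiv.mulLeft g) _ _ fun σ => rfl

theorem smul_mem_span_invariants [DecidableEq G] (θ : G → B → B) (hone : ∀ x, ρ 1 x = x)
    (hmul : ∀ g h x, ρ (g * h) x = ρ g (ρ h x))
    (hsmul : ∀ g b x, ρ g (b • x) = θ g b • ρ g x)
    {ι : Type*} [Fintype ι] (b β : ι → B) (d : B)
    (hd : ∀ σ, ∑ i, β i * θ σ (b i) = if σ = 1 then d else 0) (x : M) :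
    d • x ∈ Submodule.span B {y : M | ∀ g, ρ g y = y} := by
  have hdx : d • x = ∑ i, β i • ∑ σ, ρ σ (b i • x) :=
    calc d • x = ∑ σ, (if σ = 1 then d else 0) • ρ σ x := by simp [hone]
      _ = ∑ σ, ∑ i, (β i * θ σ (b i)) • ρ σ x := by simp only [← hd, sum_smul]
      _ = ∑ i, β i • ∑ σ, ρ σ (b i • x) := by
        rw [sum_comm]
        simp only [smul_sum, hsmul, smul_smul]
  rw [hdx]
  exact Submodule.sum_mem _ fun i _ => Submodule.smul_mem _ _
    (Submodule.subset_span (apply_sum_apply_eq_sum_apply ρ hmul · _))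

end Descent

theorem different_kills_cokernel_general
    (A K L B : Type*) [CommRing A] [CommRing B] [Field K] [Field L]
    [IsDomain A] [IsDiscreteValuationRing A] [IsIntegrallyClosed A]
    [Algebra A K] [IsFractionRing A K]
    [Algebra K L] [FiniteDimensional K L] [IsGalois K L]
    [Algebra A B] [Algebra B L] [Algebra A L]
    [IsScalarTower A B L] [IsScalarTower A K L]
    [IsIntegralClosure B A L]
    [IsDedekindDomain B] [NoZeroSMulDivisors A B]
    (M : Type*) [AddCommGroup M] [Module B M]
    (ρ : (L ≃ₐ[K] L) → M → M)
    (hone : ∀ x, ρ 1 x = x)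
    (hmul : ∀ g h x, ρ (g * h) x = ρ g (ρ h x))
    (hadd : ∀ g x y, ρ g (x + y) = ρ g x + ρ g y)
    (hsmul : ∀ g (b : B) x, ρ g (b • x) = galRestrict A K L B g b • ρ g x) :
    ∀ d ∈ differentIdeal A B, ∀ x : M,
      d • x ∈ Submodule.span B {y : M | ∀ g, ρ g y = y} := by
  classical
  intro d hd x
  obtain ⟨_, b, β, hβ⟩ := exists_sum_mul_galRestrict_eq_ite A K L B hd
  exact smul_mem_span_invariants (fun g => AddMonoidHom.mk' (ρ g) (hadd g))
    (galRestrict A K L B ·) hone hmul hsmul b β d hβ x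

/-- Let `A = O_K` be a discrete valuation ring with fraction field `K`, `L/K` a finite
Galois extension with group `G = L ≃ₐ[K] L`, and `B = O_L` the integral closure of `A`
in `L`.  Let `M` be a semi-linear `B[G]`-module.  Then the cokernel of the natural map
`φ : B ⊗[A] M^G → M` is killed by the different ideal `𝔇_{L/K}`: for every
`d ∈ 𝔇_{L/K}` and every `x ∈ M`, the element `d • x` lies in the `B`-submodule of `M`
generated by the `G`-invariants `M^G`. -/
theorem different_kills_cokernel
    (A K L B : Type*) [CommRing A] [CommRing B] [Field K] [Field L]
    [IsDomain A] [IsDiscreteValuationRing A] [IsIntegrallyClosed A]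
    [Algebra A K] [IsFractionRing A K]
    [Algebra K L] [FiniteDimensional K L] [IsGalois K L]
    [Algebra A B] [Algebra B L] [Algebra A L]
    [IsScalarTower A B L] [IsScalarTower A K L]
    [IsIntegralClosure B A L] [IsDomain B]
    [IsDedekindDomain B] [NoZeroSMulDivisors A B]
    (M : Type*) [AddCommGroup M] [Module B M] [Module A M] [IsScalarTower A B M]
    (ρ : (L ≃ₐ[K] L) → M → M)
    (hone : ∀ x, ρ 1 x = x)
    (hmul : ∀ g h x, ρ (g * h) x = ρ g (ρ h x))
    (hadd : ∀ g x y, ρ g (x + y) = ρ g x + ρ g y)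
    (hsmul : ∀ g (b : B) x, ρ g (b • x) = galRestrict A K L B g b • ρ g x) :
    ∀ d ∈ differentIdeal A B, ∀ x : M,
      d • x ∈ Submodule.span B {y : M | ∀ g, ρ g y = y} :=
  different_kills_cokernel_general A K L B M ρ hone hmul hadd hsmul
end

section
/- Suppose O_L is monogenic over O_K, say O_L = O_K[θ]. Let M = O_L[G], made into a semi-linear O_L[G]-module by σ(Σ_τ λ_τ·τ) := Σ_τ σ(λ_τ)·(στ), with right O_L-module structure (Σ_τ λ_τ·τ)*μ := Σ_τ λ_τ τ(μ)·τ. If b ∈ O_L satisfies bM ⊆ O_L·M^G (the left O_L-submodule of M generated by the G-invariants M^G), then b ∈ 𝔇_{L/K}. In particular the annihilation bound of the previous proposition by the different is sharp for monogenic extensions. -/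
/-! Let `P` be the minimal polynomial of `θ` over `A`. An invariant `f : G → B` satisfies
`f τ = τ (f 1)`, and `f 1` is a polynomial in `θ`; so every element of the span of the invariants
is `τ ↦ F (τ θ)` for some `F ∈ B[X]`. For `b • δ₁` this `F` vanishes at the conjugates `τ θ ≠ θ`
and takes the value `b` at `θ`. As `θ` generates `L/K`, these `#G = deg P` conjugates are exactly
the roots of `P`, so `∏_{τ ≠ 1} (X - τ θ)` divides `F` and, evaluating at `θ`, `P'(θ) ∣ b`.
Finally `P'(θ)` lies in the different. -/

open Polynomial IntermediateField

namespace Polynomial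

theorem aeval_surjective_of_adjoin_eq_top {R S : Type*} [CommSemiring R] [CommSemiring S]
    [Algebra R S] {x : S} (hx : Algebra.adjoin R {x} = ⊤) :
    Function.Surjective (aeval (R := R) x) := by
  rwa [← AlgHom.range_eq_top, ← Algebra.adjoin_singleton_eq_range_aeval]

variable {R ι : Type*} [CommRing R] [IsDomain R] [Fintype ι]

theorem roots_eq_map_of_injective_of_card_eq {P : R[X]} (hP : P.Monic) {x : ι → R}
    (hx : Function.Injective x) (hcard : Fintype.card ι = P.natDegree)
    (hroot : ∀ i, P.IsRoot (x i)) :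
    P.roots = Finset.univ.val.map x := by
  have hnodup : (Finset.univ.val.map x).Nodup := Finset.univ.nodup.map hx
  have hle : Finset.univ.val.map x ≤ P.roots :=
    (Multiset.le_iff_subset hnodup).2 fun y hy => by
      obtain ⟨i, -, rfl⟩ := Multiset.mem_map.1 hy
      exact (mem_roots hP.ne_zero).2 (hroot i)
  refine (Multiset.eq_of_le_of_card_le hle ?_).symm
  simpa [hcard] using card_roots' P

theorem eval_derivative_dvd_eval_of_isRoot {P : R[X]} (hP : P.Monic) {x : ι → R}
    (hx : Function.Injective x) (hcard : Fintype.card ι = P.natDegree)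
    (hroot : ∀ i, P.IsRoot (x i)) (F : R[X]) (i : ι) (hF : ∀ j ≠ i, F.IsRoot (x j)) :
    (derivative P).eval (x i) ∣ F.eval (x i) := by
  classical
  set S := Finset.univ.val.map x
  have hS : S = P.roots := (roots_eq_map_of_injective_of_card_eq hP hx hcard hroot).symm
  have hxi : x i ∈ S := Multiset.mem_map_of_mem x (Finset.mem_univ i)
  set Q := ((S.erase (x i)).map fun a => X - C a).prod
  have hPQ : (derivative P).eval (x i) = Q.eval (x i) := by
    rw [← prod_multiset_X_sub_C_of_monic_of_roots_card_eq hP (hS ▸ hcard ▸ by simp [S]), ← hS,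
      eval_multiset_prod_X_sub_C_derivative hxi, eval_multiset_prod, Multiset.map_map]
    simp only [Function.comp_def, eval_sub, eval_X, eval_C]
  rcases eq_or_ne F 0 with rfl | hF0
  · simp
  have hQF : Q ∣ F := by
    refine (Multiset.prod_X_sub_C_dvd_iff_le_roots hF0 _).2 <|
      (Multiset.le_iff_subset ((Finset.univ.nodup.map hx).erase _)).2 fun y hy => ?_
    obtain ⟨hyi, hyS⟩ := ((Finset.univ.nodup.map hx).mem_erase_iff).1 hy
    obtain ⟨j, -, rfl⟩ := Multiset.mem_map.1 hyS
    exact (mem_roots hF0).2 (hF j fun h => hyi (h ▸ rfl))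
  rw [hPQ]
  exact eval_dvd hQF

end Polynomial

section Monogenic

variable (A K L B : Type*) [CommRing A] [CommRing B] [Field K] [Field L]
  [Algebra A K] [IsFractionRing A K] [Algebra K L] [FiniteDimensional K L]
  [Algebra A B] [Algebra B L] [Algebra A L] [IsScalarTower A B L] [IsScalarTower A K L]
  [IsIntegralClosure B A L]
  {θ : B}

theorem exists_polynomial_eval_galRestrict_eq_of_mem_span_invariants
    (hθ : Algebra.adjoin A {θ} = ⊤) {f : Gal(L/K) → B}
    (hf : f ∈ Submodule.span B {f : Gal(L/K) → B | ∀ σ : Gal(L/K),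
      (fun τ => galRestrict A K L B σ (f (σ⁻¹ * τ))) = f}) :
    ∃ F : B[X], ∀ τ, F.eval (galRestrict A K L B τ θ) = f τ := by
  induction hf using Submodule.span_induction with
  | mem f hf =>
    obtain ⟨p, hp⟩ := aeval_surjective_of_adjoin_eq_top hθ (f 1)
    refine ⟨p.map (algebraMap A B), fun τ => ?_⟩
    rw [eval_map_algebraMap, aeval_algHom_apply, hp, ← congrFun (hf τ) τ, inv_mul_cancel]
  | zero => exact ⟨0, fun τ => by simp⟩
  | add f g _ _ hf hg =>
    obtain ⟨F, hF⟩ := hf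
    obtain ⟨G, hG⟩ := hg
    exact ⟨F + G, fun τ => by simp [hF, hG]⟩
  | smul c f _ hf =>
    obtain ⟨F, hF⟩ := hf
    exact ⟨C c * F, fun τ => by simp [hF]⟩

variable [IsDomain A] [IsDomain B]

theorem adjoin_algebraMap_eq_top_of_adjoin_eq_top (hθ : Algebra.adjoin A {θ} = ⊤) :
    Algebra.adjoin K {algebraMap B L θ} = ⊤ := by
  have := IsIntegralClosure.isFractionRing_of_finite_extension A K L B
  have hB (y : B) : algebraMap B L y ∈ K⟮algebraMap B L θ⟯ := by
    obtain ⟨p, rfl⟩ := aeval_surjective_of_adjoin_eq_top hθ y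
    rw [← aeval_algebraMap_apply, ← aeval_map_algebraMap K]
    exact algebra_adjoin_le_adjoin K _ (aeval_mem_adjoin_singleton K _)
  have htop : K⟮algebraMap B L θ⟯ = ⊤ := by
    refine eq_top_iff.2 fun z _ => ?_
    obtain ⟨y, s, -, rfl⟩ := IsFractionRing.div_surjective B z
    exact div_mem (hB y) (hB s)
  rw [← IntermediateField.adjoin_simple_toSubalgebra_of_isAlgebraic
    (Algebra.IsAlgebraic.isAlgebraic _), htop, IntermediateField.top_toSubalgebra]

theorem galRestrict_apply_injective (hθ : Algebra.adjoin A {θ} = ⊤) :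
    Function.Injective fun τ : Gal(L/K) => galRestrict A K L B τ θ := by
  intro σ τ h
  have hL : σ (algebraMap B L θ) = τ (algebraMap B L θ) := by
    simpa only [algebraMap_galRestrict_apply] using congrArg (algebraMap B L) h
  exact AlgEquiv.coe_toAlgHom_injective <| AlgHom.ext_of_adjoin_eq_top
    (adjoin_algebraMap_eq_top_of_adjoin_eq_top A K L B hθ) (Set.eqOn_singleton.2 hL)

theorem card_gal_eq_natDegree_minpoly [IsIntegrallyClosed A] [IsGalois K L]
    (hθ : Algebra.adjoin A {θ} = ⊤) :
    Fintype.card Gal(L/K) = (minpoly A θ).natDegree := by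
  have hθA : IsIntegral A θ := IsIntegralClosure.isIntegral A L θ
  have hθK : IsIntegral K (algebraMap B L θ) := .of_finite K _
  have htop : K⟮algebraMap B L θ⟯ = ⊤ := by
    rw [← toSubalgebra_injective.eq_iff, adjoin_simple_toSubalgebra_of_isAlgebraic hθK.isAlgebraic,
      adjoin_algebraMap_eq_top_of_adjoin_eq_top A K L B hθ, top_toSubalgebra]
  rw [← Nat.card_eq_fintype_card, IsGalois.card_aut_eq_finrank, ← finrank_top', ← htop,
    adjoin.finrank hθK, minpoly.isIntegrallyClosed_eq_field_fractions K L hθA,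
    (minpoly.monic hθA).natDegree_map]

end Monogenic

theorem mem_differentIdeal_of_smul_groupAlgebra_mem_span_invariants_general
    (A K L B : Type*) [CommRing A] [CommRing B] [Field K] [Field L]
    [IsDomain A] [IsIntegrallyClosed A]
    [Algebra A K] [IsFractionRing A K]
    [Algebra K L] [FiniteDimensional K L] [IsGalois K L]
    [Algebra A B] [Algebra B L] [Algebra A L]
    [IsScalarTower A B L] [IsScalarTower A K L]
    [IsIntegralClosure B A L]
    [IsDedekindDomain B] [NoZeroSMulDivisors A B]
    (θ : B) (hθ : Algebra.adjoin A {θ} = ⊤)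
    (b : B)
    (hb : ∀ f : (L ≃ₐ[K] L) → B,
      b • f ∈ Submodule.span B
        {f : (L ≃ₐ[K] L) → B | ∀ σ : L ≃ₐ[K] L,
          (fun τ => galRestrict A K L B σ (f (σ⁻¹ * τ))) = f}) :
    b ∈ differentIdeal A B := by
  classical
  have hθA : IsIntegral A θ := IsIntegralClosure.isIntegral A L θ
  obtain ⟨F, hF⟩ := exists_polynomial_eval_galRestrict_eq_of_mem_span_invariants A K L B hθ
    (hb (Pi.single 1 1))
  have hdvd := eval_derivative_dvd_eval_of_isRoot ((minpoly.monic hθA).map (algebraMap A B))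
    (galRestrict_apply_injective A K L B hθ)
    (by rw [card_gal_eq_natDegree_minpoly A K L B hθ, (minpoly.monic hθA).natDegree_map])
    (fun τ => by simp [eval_map_algebraMap, aeval_algHom_apply]) F 1
    (fun τ hτ => by simp [hF, hτ])
  have hFθ : F.eval θ = b := by simpa using hF 1
  simp only [map_one, AlgEquiv.one_apply, hFθ, derivative_map, eval_map_algebraMap] at hdvd
  exact Ideal.mem_of_dvd _ hdvd <| aeval_derivative_mem_differentIdeal A K L θ
    (adjoin_algebraMap_eq_top_of_adjoin_eq_top A K L B hθ)

/-- Sharpness of the different bound for monogenic extensions.  Suppose `B = O_L` is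
monogenic over `A = O_K`, say `B = A[θ]`.  Let `M = B[G]` (encoded as functions
`G → B`), made into a semi-linear `B[G]`-module by
`σ(Σ_τ λ_τ·τ) := Σ_τ σ(λ_τ)·(στ)`, i.e. `(σ ⋆ f)(τ) = σ(f(σ⁻¹τ))`, with the left
(pointwise) `B`-module structure.  If `b ∈ B` satisfies `b • M ⊆ B·M^G` (the left
`B`-submodule generated by the `G`-invariants), then `b` lies in the different ideal
`𝔇_{L/K}`. -/
theorem mem_differentIdeal_of_smul_groupAlgebra_mem_span_invariants
    (A K L B : Type*) [CommRing A] [CommRing B] [Field K] [Field L]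
    [IsDomain A] [IsDiscreteValuationRing A] [IsIntegrallyClosed A]
    [Algebra A K] [IsFractionRing A K]
    [Algebra K L] [FiniteDimensional K L] [IsGalois K L]
    [Algebra A B] [Algebra B L] [Algebra A L]
    [IsScalarTower A B L] [IsScalarTower A K L]
    [IsIntegralClosure B A L] [IsDomain B]
    [IsDedekindDomain B] [NoZeroSMulDivisors A B]
    (θ : B) (hθ : Algebra.adjoin A {θ} = ⊤)
    (b : B)
    (hb : ∀ f : (L ≃ₐ[K] L) → B,
      b • f ∈ Submodule.span B
        {f : (L ≃ₐ[K] L) → B | ∀ σ : L ≃ₐ[K] L,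
          (fun τ => galRestrict A K L B σ (f (σ⁻¹ * τ))) = f}) :
    b ∈ differentIdeal A B :=
  mem_differentIdeal_of_smul_groupAlgebra_mem_span_invariants_general A K L B θ hθ b hb
end

section
/- Suppose char(K)=0. Let M be a semi-linear O_L[G]-module that is flat over O_L, and let I ⊆ G be the inertia group of G at a maximal ideal of O_L. Then π^{v_K(|I|)}·H^1(G,M) = 0, i.e. the exponent of the O_K-module H^1(G,M) is at most v_K(|I|), the valuation of the integer |I| viewed in O_K. -/
/-!
Averaging a cocycle `c` over the inertia group `I` shows that `|I| • c` is cohomologous to a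
cocycle `c'` vanishing on `I`, hence constant on the left cosets `gI`. For `b` in the invariants
`B^I`, the element `x = -∑_{q ∈ G/I} (q • b) • c'(q)` satisfies `g • x - x = T(b) • c'(g)`, where
the relative trace `T(b) = ∑_{q ∈ G/I} q • b` is `G`-invariant and so comes from the local
ring `A`. It remains to find `b ∈ B^I` with `T(b) ∉ P`, which makes `T(b)` a unit.

Modulo `P`, `T(b)` is the sum of the residue maps `β ↦ q • β mod P` on `B^I`. Those for cosets
`q` meeting the decomposition group of `P` factor through the residue field of `P ∩ B^I`, and
they are pairwise distinct because an element acting trivially on `B^I` modulo `P` lies in `I`.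
By Dedekind's independence of characters some residue class has a nonzero sum; lift it to an
element of `B^I` lying in all the other primes `q⁻¹ • P ∩ B^I`, which differ from `P ∩ B^I` by
transitivity of `I` on the primes above `P ∩ B^I`.
-/

open Finset Polynomial Pointwise

theorem sum_out_mul_left {G N : Type*} [Group G] [AddCommMonoid N] {H : Subgroup G}
    [Fintype (G ⧸ H)] {f : G → N} (hf : ∀ g, ∀ h ∈ H, f (g * h) = f g) (g : G) :
    ∑ q : G ⧸ H, f (g * q.out) = ∑ q : G ⧸ H, f q.out := by
  refine (Fintype.sum_equiv (MulAction.toPerm g) _ _ fun q => ?_)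
  obtain ⟨h, hh, hq⟩ : ∃ h ∈ H, (g • q).out = g * q.out * h := by
    refine ⟨(g * q.out)⁻¹ * (g • q).out, QuotientGroup.eq.mp ?_, by group⟩
    rw [QuotientGroup.out_eq', ← smul_eq_mul, ← MulAction.Quotient.smul_mk, QuotientGroup.out_eq']
  simp [hq, hf _ h hh]

theorem exists_sum_apply_ne_zero_of_injective {ι F L : Type*} [Fintype ι] [Nonempty ι] [Monoid F]
    [CommRing L] [IsDomain L] {ψ : ι → F →* L} (hψ : Function.Injective ψ) :
    ∃ x, ∑ i, ψ i x ≠ 0 := by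
  by_contra! h
  have hli := (linearIndependent_monoidHom F L).comp ψ hψ
  have := Fintype.linearIndependent_iff.mp hli (fun _ => 1) (funext fun x => by simpa using h x)
  exact one_ne_zero (this (Classical.arbitrary ι))

section InertiaFixedPoints

variable {B G : Type*} [CommRing B] [Group G] [MulSemiringAction G B]

instance (H : Subgroup G) : Algebra.IsInvariant (FixedPoints.subring B H) B H :=
  ⟨fun b hb => ⟨⟨b, hb⟩, rfl⟩⟩

instance Ideal.IsMaximal.smul (P : Ideal B) [P.IsMaximal] (g : G) : (g • P).IsMaximal := by
  rw [P.pointwise_smul_eq_comap]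
  exact Ideal.comap_isMaximal_of_surjective _ (MulSemiringAction.toRingAut G B g).symm.surjective

theorem mem_inertia_of_forall_fixedPoints_smul_sub_mem [Finite G] (P : Ideal B) [P.IsPrime]
    {u : G} (hu : ∀ b ∈ FixedPoints.subring B (P.inertia G), u • b - b ∈ P) :
    u ∈ P.inertia G := by
  set I := P.inertia G
  have := Fintype.ofFinite I
  intro x
  -- `f = ∏_{h ∈ I} (X - h • x)` has `I`-invariant coefficients and reduces to `(X - x)^|I|` mod `P`
  set f := MulSemiringAction.charpoly I x
  have hfP : f.map (Ideal.Quotient.mk P) = (X - C (Ideal.Quotient.mk P x)) ^ Fintype.card I := by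
    rw [← card_univ, ← prod_const]
    simp only [f, MulSemiringAction.charpoly, Polynomial.map_prod, Polynomial.map_sub, map_X,
      map_C]
    exact prod_congr rfl fun h _ => congrArg (X - C ·) (Ideal.Quotient.eq.mpr (h.2 x))
  have huf : (u • f).map (Ideal.Quotient.mk P) = f.map (Ideal.Quotient.mk P) := by
    ext n
    simp only [coeff_map, coeff_smul]
    exact Ideal.Quotient.eq.mpr (hu _ fun h => MulSemiringAction.smul_coeff_charpoly x n h)
  have hroot : (f.map (Ideal.Quotient.mk P)).eval (Ideal.Quotient.mk P (u • x)) = 0 := by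
    rw [← huf, eval_map, eval₂_at_apply, smul_eval_smul, MulSemiringAction.eval_charpoly,
      smul_zero, map_zero]
  rw [hfP, eval_pow, eval_sub, eval_X, eval_C, pow_eq_zero_iff Fintype.card_ne_zero,
    sub_eq_zero] at hroot
  exact Ideal.Quotient.eq.mp hroot

def fixedPointsResidueHom (P : Ideal B) (H : Subgroup G) (a : G) :
    FixedPoints.subring B H →+* B ⧸ P :=
  (Ideal.Quotient.mk P).comp
    ((MulSemiringAction.toRingHom G B a).comp (FixedPoints.subring B H).subtype)

@[simp]
theorem fixedPointsResidueHom_apply (P : Ideal B) (H : Subgroup G) (a : G)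
    (β : FixedPoints.subring B H) :
    fixedPointsResidueHom P H a β = Ideal.Quotient.mk P (a • (β : B)) := rfl

theorem fixedPointsResidueHom_eq_of_mk_eq (P : Ideal B) {H : Subgroup G} {a a' : G}
    (h : (a : G ⧸ H) = a') : fixedPointsResidueHom P H a = fixedPointsResidueHom P H a' := by
  ext β
  obtain ⟨k, hk, rfl⟩ : ∃ k ∈ H, a' = a * k := ⟨a⁻¹ * a', QuotientGroup.eq.mp h, by group⟩
  have hβ : k • (β : B) = β := β.2 ⟨k, hk⟩
  simp [mul_smul, hβ]

theorem ker_fixedPointsResidueHom (P : Ideal B) (H : Subgroup G) (a : G) :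
    RingHom.ker (fixedPointsResidueHom P H a) = (a⁻¹ • P).under (FixedPoints.subring B H) := by
  ext β
  rw [RingHom.mem_ker, fixedPointsResidueHom_apply, Ideal.Quotient.eq_zero_iff_mem, Ideal.under,
    Ideal.mem_comap, Ideal.mem_inv_pointwise_smul_iff]
  rfl

theorem mk_mem_image_stabilizer_of_ker_le [Finite G] (P : Ideal B) [P.IsMaximal]
    (H : Subgroup G) {a : G}
    (ha : RingHom.ker (fixedPointsResidueHom P H a) ≤ P.under (FixedPoints.subring B H)) :
    (a : G ⧸ H) ∈ QuotientGroup.mk '' (MulAction.stabilizer G P : Set G) := by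
  rw [ker_fixedPointsResidueHom] at ha
  have := Algebra.IsInvariant.isIntegral (FixedPoints.subring B H) B H
  have hunder := (Ideal.isMaximal_comap_of_isIntegral_of_isMaximal (a⁻¹ • P)).eq_of_le
    Ideal.IsPrime.ne_top' ha
  obtain ⟨⟨h, hh⟩, hP⟩ :=
    Algebra.IsInvariant.exists_smul_of_under_eq _ B H P (a⁻¹ • P) hunder.symm
  refine ⟨a * h, ?_, QuotientGroup.mk_mul_of_mem a hh⟩
  rw [SetLike.mem_coe, MulAction.mem_stabilizer_iff, mul_smul]
  convert smul_inv_smul a P using 2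
  exact hP.symm

theorem mk_eq_of_fixedPointsResidueHom_eq [Finite G] (P : Ideal B) [P.IsPrime] {g g' : G}
    (hg' : g' ∈ MulAction.stabilizer G P)
    (h : fixedPointsResidueHom P (P.inertia G) g = fixedPointsResidueHom P (P.inertia G) g') :
    (g : G ⧸ P.inertia G) = g' := by
  rw [QuotientGroup.eq, ← inv_mem_iff, mul_inv_rev, inv_inv]
  refine mem_inertia_of_forall_fixedPoints_smul_sub_mem P fun β hβ => ?_
  have : g • β - g' • β ∈ g' • P :=
    hg'.symm ▸ Ideal.Quotient.eq.mp (DFunLike.congr_fun h ⟨β, hβ⟩)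
  rw [Ideal.mem_pointwise_smul_iff_inv_smul_mem] at this
  simpa [smul_sub, mul_smul] using this

theorem exists_notMem_under_fixedPointsResidueHom_eq_zero [Finite G] (P : Ideal B) [P.IsMaximal]
    [Fintype (G ⧸ P.inertia G)] :
    ∃ τ : FixedPoints.subring B (P.inertia G),
      τ ∉ P.under (FixedPoints.subring B (P.inertia G)) ∧
      ∀ q : G ⧸ P.inertia G, q ∉ QuotientGroup.mk '' (MulAction.stabilizer G P : Set G) →
        fixedPointsResidueHom P (P.inertia G) q.out τ = 0 := by
  classical
  set φ := fixedPointsResidueHom P (P.inertia G)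
  set D : Set (G ⧸ P.inertia G) := QuotientGroup.mk '' (MulAction.stabilizer G P : Set G)
  have := Algebra.IsInvariant.isIntegral (FixedPoints.subring B (P.inertia G)) B (P.inertia G)
  have : (P.under (FixedPoints.subring B (P.inertia G))).IsPrime :=
    (Ideal.isMaximal_comap_of_isIntegral_of_isMaximal P).isPrime
  obtain ⟨τ, hτ, hτP⟩ : ∃ τ ∈ (univ.filter (· ∉ D)).inf fun q => RingHom.ker (φ q.out),
      τ ∉ P.under (FixedPoints.subring B (P.inertia G)) := by
    refine SetLike.not_le_iff_exists.mp fun hle => ?_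
    obtain ⟨q, hq, hle⟩ := (Ideal.IsPrime.inf_le' inferInstance).mp hle
    have hmem := mk_mem_image_stabilizer_of_ker_le P _ hle
    rw [QuotientGroup.out_eq'] at hmem
    exact (mem_filter.mp hq).2 hmem
  exact ⟨τ, hτP, fun q hq => Finset.inf_le (f := fun q => RingHom.ker (φ q.out))
    (mem_filter.mpr ⟨mem_univ q, hq⟩) hτ⟩

theorem exists_mem_fixedPoints_sum_out_smul_notMem [Finite G] (P : Ideal B) [P.IsMaximal]
    [Fintype (G ⧸ P.inertia G)] :
    ∃ b ∈ FixedPoints.subring B (P.inertia G), ∑ q : G ⧸ P.inertia G, q.out • b ∉ P := by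
  classical
  set O := FixedPoints.subring B (P.inertia G)
  set φ := fixedPointsResidueHom P (P.inertia G)
  set D : Set (G ⧸ P.inertia G) := QuotientGroup.mk '' (MulAction.stabilizer G P : Set G)
  have := Algebra.IsInvariant.isIntegral O B (P.inertia G)
  have : (P.under O).IsMaximal := Ideal.isMaximal_comap_of_isIntegral_of_isMaximal P
  let := Ideal.Quotient.field (P.under O)
  have hφ_mk (g : G) : φ (g : G ⧸ P.inertia G).out = φ g :=
    fixedPointsResidueHom_eq_of_mk_eq P (QuotientGroup.out_eq' _)
  have hkill (q : D) : P.under O ≤ RingHom.ker (φ q.1.out) := by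
    obtain ⟨_, g, hgP, rfl⟩ := q
    rw [hφ_mk, ker_fixedPointsResidueHom, inv_smul_eq_iff.mpr hgP.symm]
  let ψ (q : D) : O ⧸ P.under O →+* B ⧸ P := Ideal.Quotient.lift _ (φ q.1.out) (hkill q)
  have hψ : Function.Injective fun q => (ψ q : O ⧸ P.under O →* B ⧸ P) := by
    rintro ⟨_, g, _, rfl⟩ ⟨_, g', hg'P, rfl⟩ h
    refine Subtype.ext (mk_eq_of_fixedPointsResidueHom_eq P hg'P ?_)
    change φ g = φ g'
    rw [← hφ_mk g, ← hφ_mk g']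
    ext β
    exact DFunLike.congr_fun h (Ideal.Quotient.mk _ β)
  have : Nonempty D := ⟨⟨((1 : G) : G ⧸ P.inertia G), 1, one_mem _, rfl⟩⟩
  obtain ⟨β', hβ'⟩ := exists_sum_apply_ne_zero_of_injective hψ
  obtain ⟨τ, hτP, hτ⟩ := exists_notMem_under_fixedPointsResidueHom_eq_zero (G := G) P
  obtain ⟨β₀, hβ₀⟩ := Ideal.Quotient.mk_surjective ((Ideal.Quotient.mk _ τ)⁻¹ * β')
  have hβ : Ideal.Quotient.mk (P.under O) (τ * β₀) = β' := by
    rw [map_mul, hβ₀, ← mul_assoc, mul_inv_cancel₀ (by rwa [Ne, Ideal.Quotient.eq_zero_iff_mem]),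
      one_mul]
  refine ⟨τ * β₀, (τ * β₀).2, fun hmem => hβ' ?_⟩
  calc ∑ q : D, ψ q β'
      = ∑ q : D, φ q.1.out (τ * β₀) := by rw [← hβ]; rfl
    _ = ∑ q : G ⧸ P.inertia G, φ q.out (τ * β₀) := by
        rw [← Fintype.sum_subtype_add_sum_subtype (· ∈ D), left_eq_add]
        exact sum_eq_zero fun q _ => by rw [map_mul, hτ q q.2, zero_mul]
    _ = Ideal.Quotient.mk P (∑ q : G ⧸ P.inertia G, q.out • ((τ * β₀ : O) : B)) := by
        rw [map_sum]
        rfl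
    _ = 0 := Ideal.Quotient.eq_zero_iff_mem.mpr hmem

theorem smul_sum_out_smul (H : Subgroup G) [Fintype (G ⧸ H)] {b : B}
    (hb : b ∈ FixedPoints.subring B H) (g : G) :
    g • ∑ q : G ⧸ H, q.out • b = ∑ q : G ⧸ H, q.out • b := by
  simp only [smul_sum, smul_smul]
  refine sum_out_mul_left (H := H) (f := fun k => k • b) (fun k h hh => ?_) g
  rw [mul_smul, show h • b = b from hb ⟨h, hh⟩]

theorem isUnit_of_forall_smul_eq_self_of_notMem (A : Type*) [CommRing A] [IsLocalRing A]
    [Algebra A B] [Finite G] [Algebra.IsInvariant A B G] (P : Ideal B) [P.IsMaximal] {b : B}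
    (hb : ∀ g : G, g • b = b) (hbP : b ∉ P) : IsUnit b := by
  obtain ⟨a, rfl⟩ := Algebra.IsInvariant.isInvariant (A := A) (G := G) b hb
  have := Algebra.IsInvariant.isIntegral A B G
  have hmax : P.under A = IsLocalRing.maximalIdeal A :=
    IsLocalRing.eq_maximalIdeal (Ideal.isMaximal_comap_of_isIntegral_of_isMaximal P)
  refine (IsLocalRing.notMem_maximalIdeal.mp fun ha => hbP ?_).map (algebraMap A B)
  rwa [← hmax] at ha

end InertiaFixedPoints

namespace groupCohomology

variable {G M : Type*} [Group G] [AddCommGroup M] [DistribMulAction G M] {c : G → M}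

theorem IsCocycle₁.isCoboundary₁_card_nsmul [Fintype G] (hc : IsCocycle₁ c) :
    IsCoboundary₁ (Nat.card G • c) := by
  refine ⟨-∑ h, c h, fun g => ?_⟩
  have hshift : g • ∑ h, c h + Nat.card G • c g = ∑ h, c h := by
    rw [smul_sum, Nat.card_eq_fintype_card, ← card_univ, ← sum_const, ← sum_add_distrib]
    exact Fintype.sum_equiv (Equiv.mulLeft g) _ _ fun h => (hc g h).symm
  rw [smul_neg, neg_sub_neg]
  exact (eq_sub_of_add_eq' hshift).symm

theorem IsCocycle₁.restrict (hc : IsCocycle₁ c) (H : Subgroup G) :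
    IsCocycle₁ fun h : H => c h :=
  fun g h => hc g h

theorem IsCocycle₁.nsmul (hc : IsCocycle₁ c) (n : ℕ) : IsCocycle₁ (n • c) := fun g h => by
  simp [hc g h, smul_comm g n]

theorem IsCocycle₁.sub_coboundary (hc : IsCocycle₁ c) (x : M) :
    IsCocycle₁ fun g => c g - (g • x - x) := fun g h => by
  simp only [hc g h, mul_smul, smul_sub]
  abel

theorem IsCocycle₁.apply_mul_of_eq_zero {H : Subgroup G} (hc : IsCocycle₁ c)
    (hcH : ∀ h ∈ H, c h = 0) (g : G) {h : G} (hh : h ∈ H) : c (g * h) = c g := by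
  rw [hc, hcH h hh, smul_zero, zero_add]

variable {B : Type*} [CommRing B] [MulSemiringAction G B] [Module B M] [SMulDistribClass G B M]

theorem IsCoboundary₁.smul (hc : IsCoboundary₁ c) {a : B} (ha : ∀ g : G, g • a = a) :
    IsCoboundary₁ (a • c) := by
  obtain ⟨x, hx⟩ := hc
  exact ⟨a • x, fun g => by simp [smul_distrib_smul, ha, ← hx, smul_sub]⟩

theorem IsCoboundary₁.of_isUnit_smul {a : B} (ha : IsUnit a) (hfix : ∀ g : G, g • a = a)
    (hc : IsCoboundary₁ (a • c)) : IsCoboundary₁ c := by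
  obtain ⟨u, rfl⟩ := ha
  have hinv (g : G) : g • (↑u⁻¹ : B) = ↑u⁻¹ :=
    Units.eq_inv_of_mul_eq_one_left (by rw [← hfix g, ← smul_mul', Units.mul_inv, smul_one])
  simpa [smul_smul] using hc.smul hinv

theorem IsCocycle₁.isCoboundary₁_sum_out_smul_smul {H : Subgroup G} [Fintype (G ⧸ H)]
    (hc : IsCocycle₁ c) (hcH : ∀ h ∈ H, c h = 0) {b : B} (hb : b ∈ FixedPoints.subring B H) :
    IsCoboundary₁ ((∑ q : G ⧸ H, q.out • b) • c) := by
  set X := ∑ q : G ⧸ H, (q.out • b) • c q.out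
  refine ⟨-X, fun g => ?_⟩
  have hb' (k : G) {h : G} (hh : h ∈ H) : (k * h) • b = k • b := by
    rw [mul_smul, show h • b = b from hb ⟨h, hh⟩]
  have hterm (q : G ⧸ H) : g • ((q.out • b) • c q.out)
      = ((g * q.out) • b) • c (g * q.out) - ((g * q.out) • b) • c g := by
    rw [← smul_sub, hc g, add_sub_cancel_right, smul_distrib_smul, smul_smul]
  have hgX : g • X = X - (∑ q : G ⧸ H, q.out • b) • c g := by
    rw [smul_sum, sum_congr rfl fun q _ => hterm q, sum_sub_distrib, ← sum_smul,
      sum_out_mul_left (H := H) (f := fun k => (k • b) • c k) (fun k h hh => by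
        rw [hb' k hh, hc.apply_mul_of_eq_zero hcH k hh]),
      sum_out_mul_left (H := H) (f := fun k => k • b) (fun k h hh => hb' k hh)]
  rw [smul_neg, hgX, Pi.smul_apply]
  abel

theorem isCoboundary₁_card_inertia_nsmul (A : Type*) [CommRing A] [IsLocalRing A] [Algebra A B]
    [Finite G] [Algebra.IsInvariant A B G] (P : Ideal B) [P.IsMaximal] (hc : IsCocycle₁ c) :
    IsCoboundary₁ (Nat.card (P.inertia G) • c) := by
  classical
  have := Fintype.ofFinite G
  obtain ⟨x, hx⟩ := (hc.restrict (P.inertia G)).isCoboundary₁_card_nsmul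
  have hc' := (hc.nsmul (Nat.card (P.inertia G))).sub_coboundary x
  have hc'I : ∀ h ∈ P.inertia G, Nat.card (P.inertia G) • c h - (h • x - x) = 0 :=
    fun h hh => sub_eq_zero.mpr (hx ⟨h, hh⟩).symm
  obtain ⟨b, hb, hbP⟩ := exists_mem_fixedPoints_sum_out_smul_notMem (G := G) P
  have hfix := smul_sum_out_smul (P.inertia G) hb
  obtain ⟨y, hy⟩ := (hc'.isCoboundary₁_sum_out_smul_smul hc'I hb).of_isUnit_smul
    (isUnit_of_forall_smul_eq_self_of_notMem A P hfix hbP) hfix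
  refine ⟨y + x, fun g => ?_⟩
  rw [smul_add, add_sub_add_comm, hy g, sub_add_cancel]

end groupCohomology

theorem exponent_H1_le_valuation_inertia_general
    (A K L B : Type*) [CommRing A] [CommRing B] [Field K] [Field L]
    [IsDomain A] [IsDiscreteValuationRing A]
    [Algebra A K] [IsFractionRing A K]
    [Algebra K L] [FiniteDimensional K L] [IsGalois K L]
    [Algebra A B] [Algebra B L] [Algebra A L]
    [IsScalarTower A B L] [IsScalarTower A K L]
    [IsIntegralClosure B A L] [IsDomain B]
    (M : Type*) [AddCommGroup M] [Module B M] [Module A M] [IsScalarTower A B M]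
    (ρ : (L ≃ₐ[K] L) → M → M)
    (hone : ∀ x, ρ 1 x = x)
    (hmul : ∀ g h x, ρ (g * h) x = ρ g (ρ h x))
    (hadd : ∀ g x y, ρ g (x + y) = ρ g x + ρ g y)
    (hsmul : ∀ g (b : B) x, ρ g (b • x) = galRestrict A K L B g b • ρ g x)
    (π : A)
    (P : Ideal B) (hP : P.IsMaximal)
    (I : Subgroup (L ≃ₐ[K] L))
    (hI : ∀ g, g ∈ I ↔ ∀ x : B, galRestrict A K L B g x - x ∈ P)
    (e : ℕ) (he : Associated ((Nat.card I : A)) (π ^ e)) :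
    ∀ c : (L ≃ₐ[K] L) → M, (∀ g h, c (g * h) = c g + ρ g (c h)) →
      ∃ x : M, ∀ g, π ^ e • c g = ρ g x - x := by
  intro c hc
  let := IsIntegralClosure.MulSemiringAction A K L B
  let : DistribMulAction (L ≃ₐ[K] L) M :=
    { smul := ρ, one_smul := hone, mul_smul := hmul, smul_add := hadd,
      smul_zero := fun g => (AddMonoidHom.mk' (ρ g) (hadd g)).map_zero }
  have : SMulDistribClass (L ≃ₐ[K] L) B M := ⟨hsmul⟩
  have := IsIntegralClosure.isFractionRing_of_finite_extension A K L B
  have := Algebra.isInvariant_of_isGalois A K L B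
  obtain rfl : I = P.inertia (L ≃ₐ[K] L) := Subgroup.ext hI
  obtain ⟨w, hw⟩ := he
  obtain ⟨x, hx⟩ := (groupCohomology.isCoboundary₁_card_inertia_nsmul A P (c := c)
    fun g h => (hc g h).trans (add_comm _ _)).smul (a := algebraMap A B w)
    fun g => (galRestrict A K L B g).commutes w
  refine ⟨x, fun g => ?_⟩
  calc π ^ e • c g = ((Nat.card (P.inertia (L ≃ₐ[K] L)) : A) * w) • c g := by rw [hw]
    _ = algebraMap A B w • Nat.card (P.inertia (L ≃ₐ[K] L)) • c g := by
      rw [mul_comm, mul_smul, Nat.cast_smul_eq_nsmul, algebraMap_smul]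
    _ = ρ g x - x := (hx g).symm

/-- Suppose `char K = 0`.  Let `M` be a semi-linear `O_L[G]`-module, flat over
`O_L = B`, and let `I ⊆ G` be the inertia group of `G` at a maximal ideal `P` of `B`.
Then `π^{v_K(|I|)} • H¹(G, M) = 0`: every `1`-cocycle `c : G → M` becomes a coboundary
after multiplication by `π^e`, where `e = v_K(|I|)` is the valuation of `|I|` in `A`. -/
theorem exponent_H1_le_valuation_inertia
    (A K L B : Type*) [CommRing A] [CommRing B] [Field K] [Field L]
    [IsDomain A] [IsDiscreteValuationRing A] [CharZero K]
    [Algebra A K] [IsFractionRing A K]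
    [Algebra K L] [FiniteDimensional K L] [IsGalois K L]
    [Algebra A B] [Algebra B L] [Algebra A L]
    [IsScalarTower A B L] [IsScalarTower A K L]
    [IsIntegralClosure B A L] [IsDomain B]
    (M : Type*) [AddCommGroup M] [Module B M] [Module A M] [IsScalarTower A B M]
    [Module.Flat B M]
    (ρ : (L ≃ₐ[K] L) → M → M)
    (hone : ∀ x, ρ 1 x = x)
    (hmul : ∀ g h x, ρ (g * h) x = ρ g (ρ h x))
    (hadd : ∀ g x y, ρ g (x + y) = ρ g x + ρ g y)
    (hsmul : ∀ g (b : B) x, ρ g (b • x) = galRestrict A K L B g b • ρ g x)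
    (π : A) (hπ : Irreducible π)
    (P : Ideal B) (hP : P.IsMaximal)
    (I : Subgroup (L ≃ₐ[K] L))
    (hI : ∀ g, g ∈ I ↔ ∀ x : B, galRestrict A K L B g x - x ∈ P)
    (e : ℕ) (he : Associated ((Nat.card I : A)) (π ^ e)) :
    ∀ c : (L ≃ₐ[K] L) → M, (∀ g h, c (g * h) = c g + ρ g (c h)) →
      ∃ x : M, ∀ g, π ^ e • c g = ρ g x - x :=
  exponent_H1_le_valuation_inertia_general A K L B M ρ hone hmul hadd hsmul π P hP I hI e he
end

section
/- Let M be a semi-linear O_L[G]-module that is flat over O_L. Then π^{2⌊v_K(𝔇_{L/K})⌋}·H^1(G,M) = 0, i.e. the exponent of the O_K-module H^1(G,M) is at most 2⌊v_K(𝔇_{L/K})⌋. -/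
/-!
If `c` is a `1`-cocycle and `b ∈ O_L`, the average `x = ∑ₕ h(b) • c(h)` satisfies
`g • x - x = -Tr(b) • c(g)`, so the trace ideal `Tr(O_L) ⊆ O_K` kills `H¹(G, M)`. By duality
between the different and the trace form, `Tr(O_L) ⊆ π^(m+1) O_K` would force
`𝔇 ⊆ π^(m+1) O_L ⊆ P^(e(m+1))`; for `m ≥ ⌊d/e⌋` this contradicts `v_P(𝔇) = d < e(m+1)`,
so `π^m` is a trace.
-/

section Averaging

variable {G R M : Type*} [Group G] [Fintype G] [Ring R] [AddCommGroup M] [Module R M]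
  {σ : G → R → R} {ρ : G → M → M} {c : G → M} {r : R}

theorem map_sum_smul_cocycle
    (hadd : ∀ g x y, ρ g (x + y) = ρ g x + ρ g y)
    (hsmul : ∀ g (r : R) x, ρ g (r • x) = σ g r • ρ g x)
    (hc : ∀ g h, c (g * h) = c g + ρ g (c h))
    (hr : ∀ g h, σ (g * h) r = σ g (σ h r)) (g : G) :
    ρ g (∑ h, σ h r • c h) = ∑ h, σ h r • c h - (∑ h, σ h r) • c g := by
  let ρg : M →+ M := AddMonoidHom.mk' (ρ g) (hadd g)
  calc ρ g (∑ h, σ h r • c h) = ∑ h, σ (g * h) r • (c (g * h) - c g) := by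
        refine (map_sum ρg _ _).trans (Finset.sum_congr rfl fun h _ => ?_)
        rw [AddMonoidHom.mk'_apply, hsmul, hr, hc, add_sub_cancel_left]
    _ = ∑ h, σ h r • (c h - c g) :=
        Fintype.sum_equiv (Equiv.mulLeft g) _ _ fun _ => rfl
    _ = ∑ h, σ h r • c h - (∑ h, σ h r) • c g := by
        simp only [smul_sub, Finset.sum_sub_distrib, Finset.sum_smul]

theorem exists_sum_smul_cocycle_eq_coboundary
    (hadd : ∀ g x y, ρ g (x + y) = ρ g x + ρ g y)
    (hsmul : ∀ g (r : R) x, ρ g (r • x) = σ g r • ρ g x)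
    (hc : ∀ g h, c (g * h) = c g + ρ g (c h))
    (hr : ∀ g h, σ (g * h) r = σ g (σ h r)) :
    ∃ x : M, ∀ g, (∑ h, σ h r) • c g = ρ g x - x := by
  refine ⟨-∑ h, σ h r • c h, fun g => ?_⟩
  have hneg : ∀ x, ρ g (-x) = -ρ g x := (AddMonoidHom.mk' (ρ g) (hadd g)).map_neg
  rw [hneg, map_sum_smul_cocycle hadd hsmul hc hr g]
  abel

end Averaging

theorem exists_apply_eq_pow_of_not_pow_succ_dvd {A N : Type*} [CommRing A] [IsDomain A]
    [IsDiscreteValuationRing A] [AddCommGroup N] [Module A N] (f : N →ₗ[A] A) {π : A}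
    (hπ : Irreducible π) {m : ℕ} {x : N} (hx : ¬ π ^ (m + 1) ∣ f x) :
    ∃ y, f y = π ^ m := by
  have hfx : f x ≠ 0 := fun h => hx (h ▸ dvd_zero _)
  obtain ⟨n, u, hnu⟩ := IsDiscreteValuationRing.eq_unit_mul_pow_irreducible hfx hπ
  have hn : n ≤ m := by
    by_contra! hmn
    exact hx (hnu ▸ (pow_dvd_pow π hmn).mul_left _)
  refine ⟨(((u⁻¹ : Aˣ) : A) * π ^ (m - n)) • x, ?_⟩
  rw [map_smul, smul_eq_mul, hnu, mul_mul_mul_comm, u.inv_mul, one_mul, ← pow_add,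
    Nat.sub_add_cancel hn]

theorem span_algebraMap_pow_le_pow_of_div_ramificationIdx'_le {A B : Type*} [CommRing A]
    [IsDomain A] [IsDiscreteValuationRing A] [CommRing B] [IsDedekindDomain B] [Algebra A B]
    [Module.IsTorsionFree A B] [Algebra.IsIntegral A B] {π : A} (hπ : Irreducible π)
    {P : Ideal B} (hP : P.IsMaximal) {d m : ℕ}
    (hm : d / Ideal.ramificationIdx' (IsLocalRing.maximalIdeal A) P ≤ m) :
    Ideal.span {algebraMap A B (π ^ (m + 1))} ≤ P ^ (d + 1) := by
  set e := Ideal.ramificationIdx' (IsLocalRing.maximalIdeal A) P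
  have hcomap : P.comap (algebraMap A B) = IsLocalRing.maximalIdeal A :=
    IsLocalRing.eq_maximalIdeal (Ideal.isMaximal_comap_of_isIntegral_of_isMaximal P)
  have he : e ≠ 0 := by
    refine Ideal.IsDedekindDomain.ramificationIdx'_ne_zero ?_ hP.isPrime
      (Ideal.map_le_iff_le_comap.mpr hcomap.ge)
    rw [ne_eq, Ideal.map_eq_bot_iff_of_injective (FaithfulSMul.algebraMap_injective A B)]
    exact IsDiscreteValuationRing.not_a_field A
  have hπe : algebraMap A B π ∈ P ^ e :=
    Ideal.le_pow_ramificationIdx' (Ideal.mem_map_of_mem _ hπ.not_isUnit)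
  have hde : d + 1 ≤ e * (m + 1) :=
    (Nat.lt_mul_div_succ d (Nat.pos_of_ne_zero he)).trans_le (by gcongr)
  rw [Ideal.span_le, Set.singleton_subset_iff, map_pow]
  exact Ideal.pow_le_pow_right hde (pow_mul P e (m + 1) ▸ Ideal.pow_mem_pow hπe (m + 1))

theorem differentIdeal_le_span_of_forall_dvd_intTrace {A B : Type*} (K L : Type*) [CommRing A]
    [CommRing B] [Field K] [Field L] [IsDomain A] [IsIntegrallyClosed A] [Algebra A K]
    [IsFractionRing A K] [Algebra K L] [FiniteDimensional K L] [Algebra.IsSeparable K L]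
    [Algebra A B] [Algebra B L] [Algebra A L] [IsScalarTower A B L] [IsScalarTower A K L]
    [IsIntegralClosure B A L] [IsDedekindDomain B] [Module.IsTorsionFree A B]
    [IsFractionRing B L] [Module.Finite A B] {a : A} (ha : a ≠ 0)
    (h : ∀ b : B, a ∣ Algebra.intTrace A B b) :
    differentIdeal A B ≤ Ideal.span {algebraMap A B a} := by
  have haK : algebraMap A K a ≠ 0 := (map_ne_zero_iff _ (IsFractionRing.injective A K)).mpr ha
  have haL : algebraMap B L (algebraMap A B a) = algebraMap K L (algebraMap A K a) := by
    rw [← IsScalarTower.algebraMap_apply, ← IsScalarTower.algebraMap_apply]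
  rw [← FractionalIdeal.coeIdeal_le_coeIdeal L, FractionalIdeal.coeIdeal_span_singleton, haL,
    differentialIdeal_le_fractionalIdeal_iff (K := K)
      (FractionalIdeal.spanSingleton_eq_zero_iff.not.mpr ((map_ne_zero _).mpr haK)),
    Submodule.map_le_iff_le_comap]
  intro z hz
  rw [Submodule.restrictScalars_mem, FractionalIdeal.spanSingleton_inv, FractionalIdeal.mem_coe,
    FractionalIdeal.mem_spanSingleton] at hz
  obtain ⟨b, rfl⟩ := hz
  obtain ⟨t, ht⟩ := h b
  refine ⟨t, ?_⟩
  rw [LinearMap.restrictScalars_apply, Algebra.smul_def, ← map_inv₀, mul_comm, ← Algebra.smul_def,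
    LinearMap.map_smul, ← Algebra.algebraMap_intTrace (A := A), ht, map_mul, smul_eq_mul,
    ← mul_assoc, inv_mul_cancel₀ haK, one_mul]
  exact (Algebra.algebraMap_eq_smul_one t).symm

theorem sum_galRestrict_eq_algebraMap_intTrace (A K L : Type*) {B : Type*} [CommRing A]
    [CommRing B] [Field K] [Field L] [IsDomain A] [IsIntegrallyClosed A] [Algebra A K]
    [IsFractionRing A K] [Algebra K L] [FiniteDimensional K L] [IsGalois K L]
    [Algebra A B] [Algebra B L] [Algebra A L] [IsScalarTower A B L] [IsScalarTower A K L]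
    [IsIntegralClosure B A L] [IsDomain B] [IsIntegrallyClosed B] [Module.IsTorsionFree A B]
    [IsFractionRing B L] [Module.Finite A B] (x : B) :
    ∑ σ : L ≃ₐ[K] L, galRestrict A K L B σ x = algebraMap A B (Algebra.intTrace A B x) := by
  apply IsFractionRing.injective B L
  simp only [map_sum, algebraMap_galRestrict_apply, ← trace_eq_sum_automorphisms,
    ← Algebra.algebraMap_intTrace (A := A), ← IsScalarTower.algebraMap_apply]

theorem exists_intTrace_eq_pow_of_not_differentIdeal_le {A B : Type*} (K L : Type*) [CommRing A]
    [CommRing B] [Field K] [Field L] [IsDomain A] [IsDiscreteValuationRing A] [Algebra A K]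
    [IsFractionRing A K] [Algebra K L] [FiniteDimensional K L] [Algebra.IsSeparable K L]
    [Algebra A B] [Algebra B L] [Algebra A L]
    [IsScalarTower A B L] [IsScalarTower A K L] [IsIntegralClosure B A L] [IsDedekindDomain B]
    [Module.IsTorsionFree A B] [IsFractionRing B L] [Module.Finite A B] {π : A}
    (hπ : Irreducible π) {P : Ideal B} (hP : P.IsMaximal) {d m : ℕ}
    (hd : ¬ differentIdeal A B ≤ P ^ (d + 1))
    (hm : d / Ideal.ramificationIdx' (IsLocalRing.maximalIdeal A) P ≤ m) :
    ∃ b : B, Algebra.intTrace A B b = π ^ m := by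
  have : Algebra.IsIntegral A B := IsIntegralClosure.isIntegral_algebra A L
  by_contra! hno
  refine hd ((differentIdeal_le_span_of_forall_dvd_intTrace K L (pow_ne_zero _ hπ.ne_zero)
    fun b => ?_).trans (span_algebraMap_pow_le_pow_of_div_ramificationIdx'_le hπ hP hm))
  by_contra hb
  obtain ⟨y, hy⟩ := exists_apply_eq_pow_of_not_pow_succ_dvd _ hπ hb
  exact hno y hy

theorem exponent_H1_le_two_mul_val_different_general
    (A K L B : Type*) [CommRing A] [CommRing B] [Field K] [Field L]
    [IsDomain A] [IsDiscreteValuationRing A]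
    [Algebra A K] [IsFractionRing A K]
    [Algebra K L] [FiniteDimensional K L] [IsGalois K L]
    [Algebra A B] [Algebra B L] [Algebra A L]
    [IsScalarTower A B L] [IsScalarTower A K L]
    [IsIntegralClosure B A L]
    [IsDedekindDomain B] [NoZeroSMulDivisors A B]
    (M : Type*) [AddCommGroup M] [Module B M] [Module A M] [IsScalarTower A B M]
    (ρ : (L ≃ₐ[K] L) → M → M)
    (hadd : ∀ g x y, ρ g (x + y) = ρ g x + ρ g y)
    (hsmul : ∀ g (b : B) x, ρ g (b • x) = galRestrict A K L B g b • ρ g x)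
    (π : A) (hπ : Irreducible π)
    (P : Ideal B) (hP : P.IsMaximal)
    (d : ℕ) (hd : differentIdeal A B ≤ P ^ d ∧ ¬ differentIdeal A B ≤ P ^ (d + 1))
    (e : ℕ) (he : e = Ideal.ramificationIdx' (IsLocalRing.maximalIdeal A) P) :
    ∀ c : (L ≃ₐ[K] L) → M, (∀ g h, c (g * h) = c g + ρ g (c h)) →
      ∃ x : M, ∀ g, π ^ (2 * (d / e)) • c g = ρ g x - x := by
  intro c hc
  have : IsFractionRing B L := IsIntegralClosure.isFractionRing_of_finite_extension A K L B
  have : Module.Finite A B := IsIntegralClosure.finite A K L B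
  obtain ⟨b, hb⟩ := exists_intTrace_eq_pow_of_not_differentIdeal_le K L hπ hP hd.2
    (m := 2 * (d / e)) (he ▸ Nat.le_mul_of_pos_left _ two_pos)
  have hσ : ∀ g h, galRestrict A K L B (g * h) b =
      galRestrict A K L B g (galRestrict A K L B h b) := fun g h => by
    rw [map_mul, AlgEquiv.mul_apply]
  obtain ⟨x, hx⟩ := exists_sum_smul_cocycle_eq_coboundary hadd hsmul hc hσ
  refine ⟨x, fun g => ?_⟩
  rw [← hx, sum_galRestrict_eq_algebraMap_intTrace A K L, hb, algebraMap_smul]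

/-- Let `M` be a semi-linear `O_L[G]`-module, flat over `O_L = B`.  Then
`π^{2⌊v_K(𝔇_{L/K})⌋} • H¹(G, M) = 0`: every `1`-cocycle `c : G → M` becomes a
coboundary after multiplication by `π^{2⌊d/e⌋}`, where `d = v_L(𝔇_{L/K})` is the
exponent of the different at a maximal ideal `P` of `B` and `e = e_{L/K}` is the
ramification index of `P` over the maximal ideal of `A` (so `⌊v_K(𝔇_{L/K})⌋ = d / e`
with natural number division). -/
theorem exponent_H1_le_two_mul_val_different
    (A K L B : Type*) [CommRing A] [CommRing B] [Field K] [Field L]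
    [IsDomain A] [IsDiscreteValuationRing A] [IsIntegrallyClosed A]
    [Algebra A K] [IsFractionRing A K]
    [Algebra K L] [FiniteDimensional K L] [IsGalois K L]
    [Algebra A B] [Algebra B L] [Algebra A L]
    [IsScalarTower A B L] [IsScalarTower A K L]
    [IsIntegralClosure B A L] [IsDomain B]
    [IsDedekindDomain B] [NoZeroSMulDivisors A B]
    (M : Type*) [AddCommGroup M] [Module B M] [Module A M] [IsScalarTower A B M]
    [Module.Flat B M]
    (ρ : (L ≃ₐ[K] L) → M → M)
    (hone : ∀ x, ρ 1 x = x)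
    (hmul : ∀ g h x, ρ (g * h) x = ρ g (ρ h x))
    (hadd : ∀ g x y, ρ g (x + y) = ρ g x + ρ g y)
    (hsmul : ∀ g (b : B) x, ρ g (b • x) = galRestrict A K L B g b • ρ g x)
    (π : A) (hπ : Irreducible π)
    (P : Ideal B) (hP : P.IsMaximal)
    (d : ℕ) (hd : differentIdeal A B ≤ P ^ d ∧ ¬ differentIdeal A B ≤ P ^ (d + 1))
    (e : ℕ) (he : e = Ideal.ramificationIdx' (IsLocalRing.maximalIdeal A) P) :
    ∀ c : (L ≃ₐ[K] L) → M, (∀ g h, c (g * h) = c g + ρ g (c h)) →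
      ∃ x : M, ∀ g, π ^ (2 * (d / e)) • c g = ρ g x - x :=
  exponent_H1_le_two_mul_val_different_general A K L B M ρ hadd hsmul π hπ P hP d hd e he
end

section
/- Let M be a semi-linear O_L[G]-module, flat over O_L. Then the canonical homomorphism lim_n (M^G/π^{n+1}M^G) → lim_n (M/π^{n+1}M)^G = (lim_n M/π^{n+1}M)^G is an isomorphism; in other words, the π-adic completion of M^G maps isomorphically onto the G-invariants of the π-adic completion of M. -/
/-!
Choose `e ∈ O_L` whose trace `d = ∑ σ, σ e` is nonzero and write `d = u π ^ c`. The twisted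
trace `T m = ∑ σ, σ (e m)` maps `M` into `M^G`, and on an element invariant modulo `π ^ k` it
agrees with multiplication by `d` modulo `π ^ k`. So for a compatible system `(x n)` of elements
invariant modulo `π ^ (n + 1)`, the elements `T (x (n + c)) / d` exist, because flatness makes
`M` torsion free, and form a compatible system of invariants approximating `(x n)`.
Torsion-freeness also shows that an invariant element divisible by `π ^ (n + 1)` in `M` is
divisible by it in `M^G`.
-/

section Approximation

variable {A M : Type*} [CommRing A] [AddCommGroup M] [Module A M]

theorem exists_add_sub_eq_pow_smul {π : A} {x : ℕ → M}
    (hx : ∀ n, ∃ y, x (n + 1) - x n = π ^ (n + 1) • y) (n k : ℕ) :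
    ∃ y, x (n + k) - x n = π ^ (n + 1) • y := by
  induction k with
  | zero => exact ⟨0, by simp⟩
  | succ k ih =>
    obtain ⟨y, hy⟩ := ih
    obtain ⟨y', hy'⟩ := hx (n + k)
    refine ⟨π ^ k • y' + y, ?_⟩
    rw [smul_add, smul_smul, ← pow_add, show n + 1 + k = n + k + 1 by omega, ← hy', ← hy,
      ← add_assoc]
    abel

theorem exists_compatible_mem_of_linearMap_approx {π : A} (u : Aˣ) (c : ℕ)
    (hreg : IsSMulRegular M (u * π ^ c)) {N : Submodule A M}
    (hN : ∀ m, (u * π ^ c) • m ∈ N → m ∈ N) (T : M →ₗ[A] M) (hTN : ∀ m, T m ∈ N)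
    {x : ℕ → M} (hx : ∀ n, ∃ y, x (n + 1) - x n = π ^ (n + 1) • y)
    (hTx : ∀ n, ∃ Y, T (x n) = (u * π ^ c) • x n + π ^ (n + 1) • Y) :
    ∃ z : ℕ → M, (∀ n, z n ∈ N) ∧
      (∀ n, ∃ w ∈ N, z (n + 1) - z n = π ^ (n + 1) • w) ∧
      (∀ n, ∃ y, x n - z n = π ^ (n + 1) • y) := by
  choose Y hY using hTx
  have hscal (n : ℕ) : u * π ^ c * (π ^ (n + 1) * ↑u⁻¹) = π ^ (n + c + 1) := by
    linear_combination π ^ (n + c + 1) * u.mul_inv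
  set z : ℕ → M := fun n => x (n + c) + π ^ (n + 1) • (↑u⁻¹ : A) • Y (n + c) with hz
  have hTz (n : ℕ) : T (x (n + c)) = (u * π ^ c) • z n := by
    simp only [hz, hY, smul_add, smul_smul, hscal]
  refine ⟨z, fun n => hN _ (hTz n ▸ hTN _), fun n => ?_, fun n => ?_⟩
  · obtain ⟨y, hy⟩ := hx (n + c)
    refine ⟨(↑u⁻¹ : A) • T y, N.smul_mem _ (hTN y), hreg ?_⟩
    simp only [smul_sub, smul_smul, hscal, ← hTz, ← map_sub, show n + 1 + c = n + c + 1 by omega,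
      hy, map_smul]
  · obtain ⟨y, hy⟩ := exists_add_sub_eq_pow_smul hx n c
    refine ⟨-(y + (↑u⁻¹ : A) • Y (n + c)), ?_⟩
    rw [smul_neg, smul_add, ← hy]
    simp only [hz]
    abel

end Approximation

section SemilinearAction

variable {G A B M : Type*} [CommRing A] [CommRing B] [Algebra A B]
  [AddCommGroup M] [Module A M] [Module B M] [IsScalarTower A B M]

def linearMapOfSemilinear (ψ : G → B ≃ₐ[A] B) (ρ : G → M → M)
    (hadd : ∀ g x y, ρ g (x + y) = ρ g x + ρ g y)
    (hsmul : ∀ g (b : B) x, ρ g (b • x) = ψ g b • ρ g x) (g : G) : M →ₗ[A] M where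
  toFun := ρ g
  map_add' := hadd g
  map_smul' a x := by
    rw [← algebraMap_smul B a x, hsmul, AlgEquiv.commutes, algebraMap_smul, RingHom.id_apply]

def invariants (ρ : G → M →ₗ[A] M) : Submodule A M :=
  ⨅ g, LinearMap.eqLocus (ρ g) LinearMap.id

theorem mem_invariants {ρ : G → M →ₗ[A] M} {m : M} : m ∈ invariants ρ ↔ ∀ g, ρ g m = m := by
  simp [invariants, Submodule.mem_iInf, LinearMap.mem_eqLocus]

theorem mem_invariants_of_smul_mem {ρ : G → M →ₗ[A] M} {a : A} (ha : IsSMulRegular M a) {m : M}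
    (h : a • m ∈ invariants ρ) : m ∈ invariants ρ :=
  mem_invariants.2 fun g => ha <| show a • ρ g m = a • m by rw [← map_smul, mem_invariants.1 h]

variable [Fintype G]

def twistedTrace (ρ : G → M →ₗ[A] M) (e : B) : M →ₗ[A] M :=
  ∑ g, ρ g ∘ₗ DistribSMul.toLinearMap A M e

theorem twistedTrace_apply (ρ : G → M →ₗ[A] M) (e : B) (m : M) :
    twistedTrace ρ e m = ∑ g, ρ g (e • m) := by
  simp [twistedTrace]

theorem twistedTrace_mem_invariants [Group G] {ρ : G → M →ₗ[A] M}
    (hmul : ∀ g h m, ρ (g * h) m = ρ g (ρ h m)) (e : B) (m : M) :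
    twistedTrace ρ e m ∈ invariants ρ := by
  refine mem_invariants.2 fun g => ?_
  simp only [twistedTrace_apply, map_sum, ← hmul]
  exact Fintype.sum_equiv (Equiv.mulLeft g) _ _ fun _ => rfl

theorem twistedTrace_eq_smul_add {ψ : G → B ≃ₐ[A] B} {ρ : G → M →ₗ[A] M}
    (hsmul : ∀ g (b : B) x, ρ g (b • x) = ψ g b • ρ g x) (e : B) {r : A} {m : M}
    (hm : ∀ g, ∃ y, ρ g m - m = r • y) :
    ∃ y, twistedTrace ρ e m = (∑ g, ψ g e) • m + r • y := by
  choose y hy using hm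
  refine ⟨∑ g, ψ g e • y g, ?_⟩
  have hterm (g : G) : ρ g (e • m) = ψ g e • m + r • ψ g e • y g := by
    rw [hsmul, ← sub_add_cancel (ρ g m) m, hy, smul_add, smul_comm r, add_comm]
  simp only [twistedTrace_apply, hterm, Finset.sum_add_distrib, Finset.sum_smul, Finset.smul_sum]

end SemilinearAction

section Galois

variable (A K L B : Type*) [CommRing A] [CommRing B] [Field K] [Field L]
  [Algebra A K] [IsFractionRing A K] [Algebra K L] [FiniteDimensional K L]
  [Algebra A B] [Algebra B L] [Algebra A L] [IsScalarTower A B L] [IsScalarTower A K L]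
  [IsIntegralClosure B A L] [IsIntegrallyClosed A]

theorem exists_intTraceAux_ne_zero [IsDomain A] [Algebra.IsSeparable K L] :
    ∃ e : B, Algebra.intTraceAux A K L B e ≠ 0 := by
  obtain ⟨ℓ, hℓ⟩ : ∃ ℓ : L, Algebra.trace K L ℓ ≠ 0 := by
    simpa [LinearMap.ext_iff] using Algebra.trace_ne_zero K L
  have hℓA : IsAlgebraic A ℓ :=
    (IsFractionRing.isAlgebraic_iff A K L).2 (Algebra.IsAlgebraic.isAlgebraic ℓ)
  obtain ⟨a, ha, hint⟩ := hℓA.exists_integral_multiple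
  obtain ⟨e, he⟩ := (IsIntegralClosure.isIntegral_iff (A := B)).1 hint
  refine ⟨e, fun h => ?_⟩
  have htrace := Algebra.map_intTraceAux (A := A) (K := K) (L := L) e
  rw [h, map_zero, he, ← IsScalarTower.algebraMap_smul K a ℓ, map_smul, smul_eq_mul] at htrace
  exact mul_ne_zero ((map_ne_zero_iff _ (IsFractionRing.injective A K)).2 ha) hℓ htrace.symm

variable {A K L B} in
theorem sum_galRestrict_eq_algebraMap_intTraceAux [IsGalois K L] (e : B) :
    ∑ σ : L ≃ₐ[K] L, galRestrict A K L B σ e = algebraMap A B (Algebra.intTraceAux A K L B e) := by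
  apply IsIntegralClosure.algebraMap_injective B A L
  rw [← IsScalarTower.algebraMap_apply, IsScalarTower.algebraMap_apply A K L,
    Algebra.map_intTraceAux, trace_eq_sum_automorphisms, map_sum]
  simp only [algebraMap_galRestrict_apply]

end Galois

/-- The two conjuncts say that `lim M^G/π^{n+1}M^G → lim (M/π^{n+1}M)^G` is surjective and
injective, elements of both limits being represented by compatible sequences in `M`. -/
theorem limit_invariants_mod_pi_iso_general
    (A K L B : Type*) [CommRing A] [CommRing B] [Field K] [Field L]
    [IsDomain A] [IsDiscreteValuationRing A]
    [Algebra A K] [IsFractionRing A K]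
    [Algebra K L] [FiniteDimensional K L] [IsGalois K L]
    [Algebra A B] [Algebra B L] [Algebra A L]
    [IsScalarTower A B L] [IsScalarTower A K L]
    [IsIntegralClosure B A L] [IsDomain B]
    (M : Type*) [AddCommGroup M] [Module B M] [Module A M] [IsScalarTower A B M]
    [Module.Flat B M]
    (ρ : (L ≃ₐ[K] L) → M → M)
    (hmul : ∀ g h x, ρ (g * h) x = ρ g (ρ h x))
    (hadd : ∀ g x y, ρ g (x + y) = ρ g x + ρ g y)
    (hsmul : ∀ g (b : B) x, ρ g (b • x) = galRestrict A K L B g b • ρ g x)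
    (π : A) (hπ : Irreducible π) :
    (∀ x : ℕ → M,
      (∀ n, ∃ y : M, x (n + 1) - x n = π ^ (n + 1) • y) →
      (∀ n g, ∃ y : M, ρ g (x n) - x n = π ^ (n + 1) • y) →
      ∃ z : ℕ → M,
        (∀ n g, ρ g (z n) = z n) ∧
        (∀ n, ∃ w : M, (∀ g, ρ g w = w) ∧ z (n + 1) - z n = π ^ (n + 1) • w) ∧
        (∀ n, ∃ y : M, x n - z n = π ^ (n + 1) • y)) ∧
    (∀ z : ℕ → M,
      (∀ n g, ρ g (z n) = z n) →
      (∀ n, ∃ w : M, (∀ g, ρ g w = w) ∧ z (n + 1) - z n = π ^ (n + 1) • w) →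
      (∀ n, ∃ y : M, z n = π ^ (n + 1) • y) →
      ∀ n, ∃ w : M, (∀ g, ρ g w = w) ∧ z n = π ^ (n + 1) • w) := by
  obtain ⟨e, he⟩ := exists_intTraceAux_ne_zero A K L B
  obtain ⟨c, u, hdu⟩ := IsDiscreteValuationRing.eq_unit_mul_pow_irreducible he hπ
  have hπB : algebraMap A B π ≠ 0 := fun h => hπ.ne_zero <| IsFractionRing.injective A K <|
    (algebraMap K L).injective <| by
      rw [← IsScalarTower.algebraMap_apply, IsScalarTower.algebraMap_apply A B L, h]
      simp only [map_zero]
  have hπM : IsSMulRegular M π := (isSMulRegular_algebraMap_iff B).1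
    (Module.Flat.isSMulRegular_of_isRegular (IsRegular.of_ne_zero hπB))
  have hdM : IsSMulRegular M (u * π ^ c) := (u.isSMulRegular M).mul (hπM.pow c)
  set ρL := linearMapOfSemilinear (galRestrict A K L B) ρ hadd hsmul
  have hinv {m : M} : m ∈ invariants ρL ↔ ∀ g, ρ g m = m := mem_invariants
  refine ⟨fun x hx hxinv => ?_, fun z hz _ hzdvd n => ?_⟩
  · obtain ⟨z, hzN, hzc, hxz⟩ := exists_compatible_mem_of_linearMap_approx u c hdM
      (fun m => mem_invariants_of_smul_mem hdM) (twistedTrace ρL e)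
      (twistedTrace_mem_invariants hmul e) hx fun n => by
        simpa only [sum_galRestrict_eq_algebraMap_intTraceAux, algebraMap_smul, hdu] using
          twistedTrace_eq_smul_add (ψ := galRestrict A K L B) (ρ := ρL) hsmul e (hxinv n)
    refine ⟨z, fun n => hinv.1 (hzN n), fun n => ?_, hxz⟩
    obtain ⟨w, hw, hzw⟩ := hzc n
    exact ⟨w, hinv.1 hw, hzw⟩
  · obtain ⟨y, hy⟩ := hzdvd n
    exact ⟨y, hinv.1 (mem_invariants_of_smul_mem (hπM.pow _) (hy ▸ hinv.2 (hz n))), hy⟩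

/-- Let `M` be a semi-linear `O_L[G]`-module, flat over `O_L = B`.  Then the canonical
homomorphism `lim_n (M^G/π^{n+1}M^G) → lim_n (M/π^{n+1}M)^G = (lim_n M/π^{n+1}M)^G`
is an isomorphism.  Elementwise:
(surjectivity) every compatible system `(x_n)` of classes that are `G`-invariant
modulo `π^{n+1}M` is realized, compatibly in `M^G/π^{n+1}M^G`, by `G`-invariant
elements `z_n` with `x_n ≡ z_n (mod π^{n+1}M)`;
(injectivity) a compatible system `(z_n)` of `G`-invariant elements which vanishes in
`lim_n M/π^{n+1}M` already vanishes in `lim_n M^G/π^{n+1}M^G`. -/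
theorem limit_invariants_mod_pi_iso
    (A K L B : Type*) [CommRing A] [CommRing B] [Field K] [Field L]
    [IsDomain A] [IsDiscreteValuationRing A]
    [Algebra A K] [IsFractionRing A K]
    [Algebra K L] [FiniteDimensional K L] [IsGalois K L]
    [Algebra A B] [Algebra B L] [Algebra A L]
    [IsScalarTower A B L] [IsScalarTower A K L]
    [IsIntegralClosure B A L] [IsDomain B]
    (M : Type*) [AddCommGroup M] [Module B M] [Module A M] [IsScalarTower A B M]
    [Module.Flat B M]
    (ρ : (L ≃ₐ[K] L) → M → M)
    (hone : ∀ x, ρ 1 x = x)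
    (hmul : ∀ g h x, ρ (g * h) x = ρ g (ρ h x))
    (hadd : ∀ g x y, ρ g (x + y) = ρ g x + ρ g y)
    (hsmul : ∀ g (b : B) x, ρ g (b • x) = galRestrict A K L B g b • ρ g x)
    (π : A) (hπ : Irreducible π) :
    (∀ x : ℕ → M,
      (∀ n, ∃ y : M, x (n + 1) - x n = π ^ (n + 1) • y) →
      (∀ n g, ∃ y : M, ρ g (x n) - x n = π ^ (n + 1) • y) →
      ∃ z : ℕ → M,
        (∀ n g, ρ g (z n) = z n) ∧
        (∀ n, ∃ w : M, (∀ g, ρ g w = w) ∧ z (n + 1) - z n = π ^ (n + 1) • w) ∧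
        (∀ n, ∃ y : M, x n - z n = π ^ (n + 1) • y)) ∧
    (∀ z : ℕ → M,
      (∀ n g, ρ g (z n) = z n) →
      (∀ n, ∃ w : M, (∀ g, ρ g w = w) ∧ z (n + 1) - z n = π ^ (n + 1) • w) →
      (∀ n, ∃ y : M, z n = π ^ (n + 1) • y) →
      ∀ n, ∃ w : M, (∀ g, ρ g w = w) ∧ z n = π ^ (n + 1) • w) :=
  limit_invariants_mod_pi_iso_general A K L B M ρ hmul hadd hsmul π hπ
end

section
/- Suppose O_K is henselian. Let E be an elliptic curve over K, L/K a finite Galois extension such that E_L has semi-stable reduction, i.e. a minimal integral Weierstrass equation W' of E_L over the localization of O_L at a maximal ideal 𝔭 satisfies v_L(Δ(W')) = 0 or v_L(c₄(W')) = 0. Let W be a minimal integral Weierstrass equation of E over O_K. Then v_L(Δ(W)) − v_L(Δ(W')) = min{ v_L(Δ(W)), 3·v_L(c₄(W)) }, where v_L(Δ(W)) = e_{L/K}·v_K(Δ(W)); equivalently, the base change conductor c(E) := (v_L(Δ(W)) − v_L(Δ(W')))/(12·e_{L/K}) equals min{ v_K(Δ(W))/12, v_K(c₄(W))/4 }. 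-/
open WeierstrassCurve

/-- `W` is an integral Weierstrass equation (model) over `R` of the Weierstrass
equation `E` over the fraction field `F`. -/
def IsIntegralModel (R F : Type*) [CommRing R] [CommRing F] [Algebra R F]
    (E : WeierstrassCurve F) (W : WeierstrassCurve R) : Prop :=
  ∃ C : VariableChange F, W.map (algebraMap R F) = C • E

/-- `W` is a minimal integral Weierstrass equation of `E` over the discrete valuation
ring `R`. -/
def IsMinimalModel (R F : Type*) [CommRing R] [CommRing F] [Algebra R F]
    (E : WeierstrassCurve F) (W : WeierstrassCurve R) : Prop :=
  IsIntegralModel R F E W ∧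
    ∀ W' : WeierstrassCurve R, IsIntegralModel R F E W' → W.Δ ∣ W'.Δ

/-!
Base-changing the minimal model `W` of `E` to the localization `Bp` gives an integral model of
`E_L`, so by minimality of `W'` it differs from `W'` by a change of variables whose scaling `u`
gives `Δ(W) = Δ(W') s³` and `c₄(W) = c₄(W') s` with `s = u⁻⁴ ∈ Bp`. Since `v_L = e · v_K` on `K`,
`e v_K(Δ(W)) = v_L(Δ(W')) + 3 v_L(s)` and `e v_K(c₄(W)) = v_L(c₄(W')) + v_L(s)`, and
semistability (`v_L(Δ(W')) = 0` or `v_L(c₄(W')) = 0`) makes both sides of the formula `3 v_L(s)`.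
-/

open IsLocalRing

section Multiplicity

variable {A R : Type*} [CommRing A] [IsDomain A] [IsDiscreteValuationRing A]
  [CommRing R] [IsDomain R]

theorem emultiplicity_map_eq_mul (f : A →+* R) {π : A} (hπ : Irreducible π) {p : R}
    (hp : Prime p) (hdvd : p ∣ f π) (x : A) :
    emultiplicity p (f x) = emultiplicity p (f π) * emultiplicity π x := by
  rcases eq_or_ne x 0 with rfl | hx
  · have : emultiplicity p (f π) ≠ 0 := emultiplicity_ne_zero.mpr hdvd
    simp [ENat.mul_top this]
  obtain ⟨n, u, rfl⟩ := IsDiscreteValuationRing.eq_unit_mul_pow_irreducible hx hπ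
  rw [map_mul, map_pow, emultiplicity_mul hp, emultiplicity_mul hπ.prime,
    emultiplicity_of_isUnit_right hp.not_isUnit (u.isUnit.map f),
    emultiplicity_of_isUnit_right hπ.not_isUnit u.isUnit, emultiplicity_pow hp,
    emultiplicity_pow_self_of_prime hπ.prime, zero_add, zero_add, mul_comm]

end Multiplicity

theorem ENat.add_three_mul_tsub_eq_min {d c m : ℕ∞} (hd : d ≠ ⊤) (h : d = 0 ∨ c = 0) :
    d + 3 * m - d = min (d + 3 * m) (3 * (c + m)) := by
  rw [(ENat.addLECancellable_of_ne_top hd).add_tsub_cancel_left]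
  rcases h with rfl | rfl <;> simp [mul_add]

namespace IsIntegralModel

section CommRing

variable {R F : Type*} [CommRing R] [CommRing F] [Algebra R F] {E : WeierstrassCurve F}
  {W W₁ W₂ : WeierstrassCurve R}

theorem Δ_ne_zero (h : IsIntegralModel R F E W) (hE : E.Δ ≠ 0) : W.Δ ≠ 0 := by
  obtain ⟨C, hC⟩ := h
  intro hW
  have := congrArg WeierstrassCurve.Δ hC
  rw [map_Δ, variableChange_Δ, hW, map_zero, eq_comm] at this
  exact hE ((Units.isUnit _).pow 12 |>.mul_right_eq_zero.mp this)

theorem map {S G : Type*} [CommRing S] [CommRing G] [Algebra S G]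
    (h : IsIntegralModel R F E W) (f : R →+* S) (g : F →+* G)
    (hfg : (algebraMap S G).comp f = g.comp (algebraMap R F)) :
    IsIntegralModel S G (E.map g) (W.map f) := by
  obtain ⟨C, hC⟩ := h
  exact ⟨C.map g, by rw [map_map, hfg, ← map_map, hC, map_variableChange]⟩

theorem exists_variableChange (h₁ : IsIntegralModel R F E W₁)
    (h₂ : IsIntegralModel R F E W₂) :
    ∃ C : VariableChange F, W₁.map (algebraMap R F) = C • W₂.map (algebraMap R F) := by
  obtain ⟨C₁, hC₁⟩ := h₁
  obtain ⟨C₂, hC₂⟩ := h₂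
  exact ⟨C₁ * C₂⁻¹, by rw [hC₁, hC₂, mul_smul, inv_smul_smul]⟩

end CommRing

variable {R F : Type*} [CommRing R] [IsIntegrallyClosed R] [Field F] [Algebra R F]
  [IsFractionRing R F] {E : WeierstrassCurve F} {W₁ W₂ : WeierstrassCurve R}

/-- Here `s = u⁻⁴` for `u` the scaling of the change of variables from `W₂` to `W₁`; it lies in
`R` because `s ^ 3 = W₁.Δ / W₂.Δ` does. -/
theorem exists_Δ_eq_mul_pow_three (h₁ : IsIntegralModel R F E W₁)
    (h₂ : IsIntegralModel R F E W₂) (hΔ : W₂.Δ ≠ 0) (hdvd : W₂.Δ ∣ W₁.Δ) :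
    ∃ s : R, W₁.Δ = W₂.Δ * s ^ 3 ∧ W₁.c₄ = W₂.c₄ * s := by
  obtain ⟨C, hC⟩ := h₁.exists_variableChange h₂
  obtain ⟨t, ht⟩ := hdvd
  have hinj := IsFractionRing.injective R F
  set w : F := ((C.u⁻¹ : Fˣ) : F) ^ 4
  have hwΔ : algebraMap R F W₁.Δ = algebraMap R F W₂.Δ * w ^ 3 := by
    have := congrArg WeierstrassCurve.Δ hC
    rw [map_Δ, variableChange_Δ, map_Δ] at this
    rw [this, mul_comm, ← pow_mul]
  have hwc : algebraMap R F W₁.c₄ = algebraMap R F W₂.c₄ * w := by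
    have := congrArg WeierstrassCurve.c₄ hC
    rw [map_c₄, variableChange_c₄, map_c₄] at this
    rw [this, mul_comm]
  have ht' : algebraMap R F t = w ^ 3 := by
    refine mul_left_cancel₀ ((map_ne_zero_iff _ hinj).mpr hΔ) ?_
    rw [← map_mul, ← ht, hwΔ]
  obtain ⟨s, hs⟩ : ∃ s : R, algebraMap R F s = w :=
    IsIntegrallyClosed.isIntegral_iff.mp <| IsIntegral.of_pow three_pos <| by
      rw [← ht']; exact isIntegral_algebraMap
  refine ⟨s, hinj ?_, hinj ?_⟩
  · rw [map_mul, map_pow, hs, hwΔ]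
  · rw [map_mul, hs, hwc]

end IsIntegralModel

theorem Ideal.ne_bot_of_isLocalization_atPrime {B Bp : Type*} [CommRing B] [CommRing Bp]
    [Algebra B Bp] (P : Ideal B) [P.IsPrime] [IsLocalization.AtPrime Bp P] {πL : Bp}
    (hπL : Irreducible πL) : P ≠ ⊥ := by
  have := IsLocalization.AtPrime.isLocalRing Bp P
  rintro rfl
  have hπL_mem : πL ∈ maximalIdeal Bp := hπL.not_isUnit
  rw [← IsLocalization.AtPrime.map_eq_maximalIdeal (⊥ : Ideal B) Bp, Ideal.map_bot,
    Ideal.mem_bot] at hπL_mem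
  exact hπL.ne_zero hπL_mem

section Ramification

variable {B Bp : Type*} [CommRing B] (P : Ideal B) [P.IsMaximal] [CommRing Bp] [IsDomain Bp]
  [IsDiscreteValuationRing Bp] [Algebra B Bp] [IsLocalization.AtPrime Bp P] {πL : Bp}

theorem mem_pow_iff_pow_dvd_algebraMap (hπL : Irreducible πL) (b : B) (n : ℕ) :
    b ∈ P ^ n ↔ πL ^ n ∣ algebraMap B Bp b := by
  rw [← IsLocalization.AtPrime.under_maximalIdeal_pow P Bp n, Ideal.mem_comap,
    (IsDiscreteValuationRing.irreducible_iff_uniformizer πL).mp hπL, Ideal.span_singleton_pow,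
    Ideal.mem_span_singleton]

theorem ramificationIdx'_span_singleton_eq_emultiplicity {R : Type*} [CommRing R]
    [Algebra R B] (hπL : Irreducible πL) (a : R) (ha : algebraMap B Bp (algebraMap R B a) ≠ 0) :
    (Ideal.ramificationIdx' (Ideal.span {a}) P : ℕ∞) =
      emultiplicity πL (algebraMap B Bp (algebraMap R B a)) := by
  have hfin := FiniteMultiplicity.of_prime_left hπL.prime ha
  have hset : {n | (Ideal.span {a}).map (algebraMap R B) ≤ P ^ n} =
      Set.Iic (multiplicity πL (algebraMap B Bp (algebraMap R B a))) := by
    ext n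
    rw [Set.mem_ofPred_eq, Ideal.map_span, Set.image_singleton, Ideal.span_singleton_le_iff_mem,
      mem_pow_iff_pow_dvd_algebraMap P hπL, hfin.pow_dvd_iff_le_multiplicity, Set.mem_Iic]
  rw [Ideal.ramificationIdx', hset, csSup_Iic, hfin.emultiplicity_eq_multiplicity]

end Ramification

theorem dvd_algebraMap_of_mem_maximalIdeal {A B Bp : Type*} [CommRing A] [IsLocalRing A]
    [CommRing B] [Algebra A B] [Algebra.IsIntegral A B] (P : Ideal B) [P.IsMaximal] [CommRing Bp]
    [IsDomain Bp] [IsDiscreteValuationRing Bp] [Algebra B Bp] [IsLocalization.AtPrime Bp P]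
    {πL : Bp} (hπL : Irreducible πL) {a : A} (ha : a ∈ maximalIdeal A) :
    πL ∣ algebraMap B Bp (algebraMap A B a) := by
  have hunder : P.comap (algebraMap A B) = maximalIdeal A :=
    eq_maximalIdeal (Ideal.isMaximal_comap_of_isIntegral_of_isMaximal P)
  have ha' : algebraMap A B a ∈ P ^ 1 := by
    rw [pow_one, ← Ideal.mem_comap, hunder]
    exact ha
  exact pow_one πL ▸ (mem_pow_iff_pow_dvd_algebraMap P hπL _ 1).mp ha'

theorem base_change_conductor_formula_general
    (A K L B : Type*) [CommRing A] [CommRing B] [Field K] [Field L]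
    [IsDomain A] [IsDiscreteValuationRing A]
    [Algebra A K] [IsFractionRing A K]
    [Algebra K L] [FiniteDimensional K L] [IsGalois K L]
    [Algebra A B] [Algebra B L] [Algebra A L]
    [IsScalarTower A B L] [IsScalarTower A K L]
    [IsIntegralClosure B A L] [IsDomain B]
    (P : Ideal B) [P.IsMaximal]
    (Bp : Type*) [CommRing Bp] [IsDomain Bp] [Algebra B Bp]
    [IsLocalization.AtPrime Bp P] [Algebra Bp L] [IsScalarTower B Bp L]
    (E : WeierstrassCurve K) (hE : E.Δ ≠ 0)
    (W : WeierstrassCurve A) (hW : IsMinimalModel A K E W)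
    (W' : WeierstrassCurve Bp)
    (hW' : IsMinimalModel Bp L (E.map (algebraMap K L)) W')
    (π : A) (hπ : Irreducible π)
    (πL : Bp) (hπL : Irreducible πL)
    (hss : emultiplicity πL W'.Δ = 0 ∨ emultiplicity πL W'.c₄ = 0)
    (e : ℕ) (he : e = Ideal.ramificationIdx' (IsLocalRing.maximalIdeal A) P) :
    (e : ℕ∞) * emultiplicity π W.Δ - emultiplicity πL W'.Δ =
      min ((e : ℕ∞) * emultiplicity π W.Δ) (3 * ((e : ℕ∞) * emultiplicity π W.c₄)) := by
  have : IsDedekindDomain B := IsIntegralClosure.isDedekindDomain A K L B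
  have : IsFractionRing B L := IsIntegralClosure.isFractionRing_of_finite_extension A K L B
  have : IsFractionRing Bp L :=
    IsFractionRing.isFractionRing_of_isDomain_of_isLocalization P.primeCompl Bp L
  have : Algebra.IsIntegral A B := IsIntegralClosure.isIntegral_algebra A L
  have : IsDiscreteValuationRing Bp :=
    IsLocalization.AtPrime.isDiscreteValuationRing_of_dedekind_domain B
      (P.ne_bot_of_isLocalization_atPrime hπL) Bp
  set f : A →+* Bp := (algebraMap B Bp).comp (algebraMap A B)
  have hf : (algebraMap Bp L).comp f = (algebraMap K L).comp (algebraMap A K) := by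
    rw [← RingHom.comp_assoc, ← IsScalarTower.algebraMap_eq B Bp L,
      ← IsScalarTower.algebraMap_eq A B L, ← IsScalarTower.algebraMap_eq A K L]
  have hfπ : f π ≠ 0 := fun h ↦ by simpa [h, hπ.ne_zero] using (RingHom.congr_fun hf π).symm
  have he_emult : (e : ℕ∞) = emultiplicity πL (f π) := by
    rw [he, (IsDiscreteValuationRing.irreducible_iff_uniformizer π).mp hπ]
    exact ramificationIdx'_span_singleton_eq_emultiplicity P hπL π hfπ
  have hπL_dvd : πL ∣ f π := dvd_algebraMap_of_mem_maximalIdeal P hπL hπ.not_isUnit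
  have hW'Δ : W'.Δ ≠ 0 := hW'.1.Δ_ne_zero <| by simpa [map_Δ] using hE
  have hWf := hW.1.map f (algebraMap K L) hf
  obtain ⟨s, hsΔ, hsc⟩ := hWf.exists_Δ_eq_mul_pow_three hW'.1 hW'Δ (hW'.2 _ hWf)
  have hΔ : (e : ℕ∞) * emultiplicity π W.Δ =
      emultiplicity πL W'.Δ + 3 * emultiplicity πL s := by
    rw [he_emult, ← emultiplicity_map_eq_mul f hπ hπL.prime hπL_dvd, ← map_Δ, hsΔ,
      emultiplicity_mul hπL.prime, emultiplicity_pow hπL.prime]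
    rfl
  have hc₄ : (e : ℕ∞) * emultiplicity π W.c₄ =
      emultiplicity πL W'.c₄ + emultiplicity πL s := by
    rw [he_emult, ← emultiplicity_map_eq_mul f hπ hπL.prime hπL_dvd, ← map_c₄, hsc,
      emultiplicity_mul hπL.prime]
  rw [hΔ, hc₄]
  exact ENat.add_three_mul_tsub_eq_min
    (finiteMultiplicity_iff_emultiplicity_ne_top.mp (.of_prime_left hπL.prime hW'Δ)) hss

/-- **Base change conductor of an elliptic curve.**  Suppose `O_K = A` is henselian.
Let `E` be an elliptic curve over `K`, `L/K` a finite Galois extension such that `E_L`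
has semi-stable reduction at the maximal ideal `P` of `O_L = B`, i.e. a minimal
integral Weierstrass equation `W'` of `E_L` over the localization `Bp` of `B` at `P`
satisfies `v_L(Δ(W')) = 0` or `v_L(c₄(W')) = 0`.  Let `W` be a minimal integral
Weierstrass equation of `E` over `A`.  Then
`v_L(Δ(W)) − v_L(Δ(W')) = min { v_L(Δ(W)), 3·v_L(c₄(W)) }`,
where `v_L(Δ(W)) = e_{L/K}·v_K(Δ(W))` and valuations are computed in `ℕ∞` as
`emultiplicity` of a uniformizer (so that `v(0) = ⊤`). -/
theorem base_change_conductor_formula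
    (A K L B : Type*) [CommRing A] [CommRing B] [Field K] [Field L]
    [IsDomain A] [IsDiscreteValuationRing A] [HenselianLocalRing A]
    [Algebra A K] [IsFractionRing A K]
    [Algebra K L] [FiniteDimensional K L] [IsGalois K L]
    [Algebra A B] [Algebra B L] [Algebra A L]
    [IsScalarTower A B L] [IsScalarTower A K L]
    [IsIntegralClosure B A L] [IsDomain B]
    (P : Ideal B) [P.IsMaximal]
    (Bp : Type*) [CommRing Bp] [IsDomain Bp] [Algebra B Bp]
    [IsLocalization.AtPrime Bp P] [Algebra Bp L] [IsScalarTower B Bp L]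
    (E : WeierstrassCurve K) (hE : E.Δ ≠ 0)
    (W : WeierstrassCurve A) (hW : IsMinimalModel A K E W)
    (W' : WeierstrassCurve Bp)
    (hW' : IsMinimalModel Bp L (E.map (algebraMap K L)) W')
    (π : A) (hπ : Irreducible π)
    (πL : Bp) (hπL : Irreducible πL)
    (hss : emultiplicity πL W'.Δ = 0 ∨ emultiplicity πL W'.c₄ = 0)
    (e : ℕ) (he : e = Ideal.ramificationIdx' (IsLocalRing.maximalIdeal A) P) :
    (e : ℕ∞) * emultiplicity π W.Δ - emultiplicity πL W'.Δ =
      min ((e : ℕ∞) * emultiplicity π W.Δ) (3 * ((e : ℕ∞) * emultiplicity π W.c₄)) :=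
  base_change_conductor_formula_general A K L B P Bp E hE W hW W' hW' π hπ πL hπL hss e he
end

section
/- Suppose O_K has perfect residue field. Let W and W_o be integral Weierstrass equations over O_K whose generic fibers are elliptic curves E and E_o over K. Suppose there exist u ∈ (O_K/π⁶O_K)^× and r, s, t ∈ O_K/π⁶O_K such that the Weierstrass change of variables x = u²x' + r, y = u³y' + u²sx' + t transforms the reduction of W modulo π⁶ into the reduction of W_o modulo π⁶. Then W is a minimal integral Weierstrass equation of E if and only if W_o is a minimal integral Weierstrass equation of E_o. -/
/-!
A model `W` with `Δ ≠ 0` fails to be minimal exactly when some change of variables over `O_K`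
turns it into an equation with `π ^ i ∣ aᵢ` for `i = 1, 2, 3, 4, 6`: dividing such an equation
through by `π` gives an integral model whose discriminant is smaller by `π ^ 12`. Conversely, a
model of smaller discriminant differs from `W` by a change of variables whose `u` lies in the
maximal ideal, and whose `r`, `s`, `t` are integral because they satisfy monic equations coming from
the transformation laws of `a₂`, `a₆`, `b₆` and `b₈`. All the exponents are at most `6` and changes
of variables modulo `π⁶` lift to `O_K`, so the criterion depends only on `W` modulo `π⁶` up to
change of variables.
-/
open WeierstrassCurve

open Polynomial

lemma isIntegral_of_sq_add_mul_add_eq_zero {A K : Type*} [CommRing A] [CommRing K] [Algebra A K]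
    (a b : A) {x : K} (h : x ^ 2 + algebraMap A K a * x + algebraMap A K b = 0) :
    IsIntegral A x :=
  ⟨X ^ 2 + C a * X + C b, by monicity!, by
    simpa only [eval₂_add, eval₂_mul, eval₂_pow, eval₂_X, eval₂_C] using h⟩

lemma isIntegral_of_pow_four_add_eq_zero {A K : Type*} [CommRing A] [CommRing K] [Algebra A K]
    (a b d : A) {x : K}
    (h : x ^ 4 + algebraMap A K a * x ^ 2 + algebraMap A K b * x + algebraMap A K d = 0) :
    IsIntegral A x :=
  ⟨X ^ 4 + C a * X ^ 2 + C b * X + C d, by monicity!, by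
    simpa only [eval₂_add, eval₂_mul, eval₂_pow, eval₂_X, eval₂_C] using h⟩

lemma Units.eq_inv_pow_mul_iff {M : Type*} [CommMonoid M] (u : Mˣ) (n : ℕ) (a b : M) :
    a = ↑u⁻¹ ^ n * b ↔ ↑u ^ n * a = b := by
  rw [← Units.val_pow_eq_pow_val, inv_pow, Units.eq_inv_mul_iff_mul_eq, Units.val_pow_eq_pow_val]

namespace WeierstrassCurve

section CommRing

variable {R : Type*} [CommRing R]

def WeightedDvd (π : R) (W : WeierstrassCurve R) : Prop :=
  π ∣ W.a₁ ∧ π ^ 2 ∣ W.a₂ ∧ π ^ 3 ∣ W.a₃ ∧ π ^ 4 ∣ W.a₄ ∧ π ^ 6 ∣ W.a₆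

/-- Over a ring in which `c` is a unit this is `⟨c⁻¹, 0, 0, 0⟩ • W`. -/
def scale (c : R) (W : WeierstrassCurve R) : WeierstrassCurve R :=
  ⟨c * W.a₁, c ^ 2 * W.a₂, c ^ 3 * W.a₃, c ^ 4 * W.a₄, c ^ 6 * W.a₆⟩

lemma Δ_scale (c : R) (W : WeierstrassCurve R) : (W.scale c).Δ = c ^ 12 * W.Δ := by
  simp only [scale, Δ, b₂, b₄, b₆, b₈]
  ring

lemma weightedDvd_scale {π c : R} (h : π ∣ c) (W : WeierstrassCurve R) :
    (W.scale c).WeightedDvd π := by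
  have hpow (n : ℕ) (x : R) : π ^ n ∣ c ^ n * x := (pow_dvd_pow_of_dvd h n).mul_right x
  exact ⟨by simpa only [scale, pow_one] using hpow 1 W.a₁, hpow 2 _, hpow 3 _, hpow 4 _, hpow 6 _⟩

lemma WeightedDvd.exists_eq_scale {π : R} {W : WeierstrassCurve R} (h : W.WeightedDvd π) :
    ∃ W' : WeierstrassCurve R, W = W'.scale π := by
  obtain ⟨⟨b₁, h₁⟩, ⟨b₂, h₂⟩, ⟨b₃, h₃⟩, ⟨b₄, h₄⟩, ⟨b₆, h₆⟩⟩ := h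
  exact ⟨⟨b₁, b₂, b₃, b₄, b₆⟩, WeierstrassCurve.ext h₁ h₂ h₃ h₄ h₆⟩

lemma weightedDvd_iff_of_map_eq {π : R} {W W' : WeierstrassCurve R}
    (h : W.map (Ideal.Quotient.mk (Ideal.span {π ^ 6})) =
      W'.map (Ideal.Quotient.mk (Ideal.span {π ^ 6}))) :
    W.WeightedDvd π ↔ W'.WeightedDvd π := by
  have congr {n : ℕ} {a b : R} (hn : n ≤ 6)
      (hab : Ideal.Quotient.mk (Ideal.span {π ^ 6}) a = Ideal.Quotient.mk _ b) :
      π ^ n ∣ a ↔ π ^ n ∣ b := by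
    have hdvd := (pow_dvd_pow π hn).trans
      (Ideal.mem_span_singleton.mp (Ideal.Quotient.eq.mp hab))
    exact ⟨fun ha => by simpa using ha.sub hdvd, fun hb => by simpa using hb.add hdvd⟩
  have h₁ := congr (n := 1) (by norm_num) (congrArg a₁ h)
  rw [pow_one] at h₁
  exact and_congr h₁ <| and_congr (congr (by norm_num) (congrArg a₂ h)) <|
    and_congr (congr (by norm_num) (congrArg a₃ h)) <|
    and_congr (congr (by norm_num) (congrArg a₄ h)) (congr le_rfl (congrArg a₆ h))

lemma exists_smul_weightedDvd_iff_of_map_eq {π : R} {W W' : WeierstrassCurve R}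
    (h : W.map (Ideal.Quotient.mk (Ideal.span {π ^ 6})) =
      W'.map (Ideal.Quotient.mk (Ideal.span {π ^ 6}))) :
    (∃ C : VariableChange R, (C • W).WeightedDvd π) ↔
      ∃ C : VariableChange R, (C • W').WeightedDvd π :=
  exists_congr fun C =>
    weightedDvd_iff_of_map_eq (by rw [← map_variableChange, h, map_variableChange])

lemma exists_smul_weightedDvd_smul_iff (π : R) (C' : VariableChange R) (W : WeierstrassCurve R) :
    (∃ C : VariableChange R, (C • C' • W).WeightedDvd π) ↔
      ∃ C : VariableChange R, (C • W).WeightedDvd π :=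
  ⟨fun ⟨C, h⟩ => ⟨C * C', by rwa [mul_smul]⟩,
    fun ⟨C, h⟩ => ⟨C * C'⁻¹, by rwa [mul_smul, inv_smul_smul]⟩⟩

lemma VariableChange.exists_map_mk_eq [IsLocalRing R] {I : Ideal R} (hI : I ≠ ⊤)
    (C : VariableChange (R ⧸ I)) : ∃ C' : VariableChange R, C'.map (Ideal.Quotient.mk I) = C := by
  have := Ideal.Quotient.nontrivial_iff.mpr hI
  have hmk := IsLocalHom.of_surjective (Ideal.Quotient.mk I) Ideal.Quotient.mk_surjective
  obtain ⟨u, hu⟩ := IsLocalRing.surjective_units_map_of_local_ringHom _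
    Ideal.Quotient.mk_surjective hmk C.u
  obtain ⟨r, hr⟩ := Ideal.Quotient.mk_surjective C.r
  obtain ⟨s, hs⟩ := Ideal.Quotient.mk_surjective C.s
  obtain ⟨t, ht⟩ := Ideal.Quotient.mk_surjective C.t
  exact ⟨⟨u, r, s, t⟩, by ext <;> simp [← hu, hr, hs, ht]⟩

lemma map_eq_smul_map_iff_eq_scale {S : Type*} [CommRing S] {f : R →+* S}
    (hf : Function.Injective f) (V W : WeierstrassCurve R) {u : Sˣ} {c : R} (hc : f c = u) :
    W.map f = (⟨u, 0, 0, 0⟩ : VariableChange S) • V.map f ↔ V = W.scale c := by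
  have key (n : ℕ) (a b : R) : f b = ↑u⁻¹ ^ n * f a ↔ a = c ^ n * b := by
    rw [Units.eq_inv_pow_mul_iff, ← hc, ← map_pow, ← map_mul, hf.eq_iff, eq_comm]
  have key₁ (a b : R) : f b = ↑u⁻¹ * f a ↔ a = c * b := by simpa using key 1 a b
  simp only [WeierstrassCurve.ext_iff, scale, map_a₁, map_a₂, map_a₃, map_a₄, map_a₆,
    variableChange_a₁, variableChange_a₂, variableChange_a₃, variableChange_a₄, variableChange_a₆,
    mul_zero, zero_mul, add_zero, sub_zero, ne_eq, OfNat.ofNat_ne_zero, not_false_eq_true,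
    zero_pow, key, key₁]

end CommRing

section FractionRing

variable {A : Type*} (K : Type*) [CommRing A] [Field K] [Algebra A K] [IsFractionRing A K]

lemma not_isMinimalModel_of_weightedDvd [IsDomain A] {π : A} (hπ : ¬IsUnit π)
    {W : WeierstrassCurve A} (hΔ : W.Δ ≠ 0) (C : VariableChange A) (hC : (C • W).WeightedDvd π) :
    ¬IsMinimalModel A K (W.map (algebraMap A K)) W := by
  obtain ⟨W', hW'⟩ := hC.exists_eq_scale
  have hCΔ : (C • W).Δ ≠ 0 := by
    rw [variableChange_Δ]
    exact mul_ne_zero (pow_ne_zero _ (Units.ne_zero _)) hΔ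
  rw [hW', Δ_scale] at hCΔ
  have hπK : algebraMap A K π ≠ 0 :=
    (map_ne_zero_iff _ (IsFractionRing.injective A K)).mpr
      (ne_zero_pow (by norm_num) (left_ne_zero_of_mul hCΔ))
  have hint : IsIntegralModel A K (W.map (algebraMap A K)) W' :=
    ⟨⟨Units.mk0 _ hπK, 0, 0, 0⟩ * C.map (algebraMap A K), by
      rw [mul_smul, map_variableChange,
        map_eq_smul_map_iff_eq_scale (IsFractionRing.injective A K) _ _ rfl]
      exact hW'⟩
  rintro ⟨-, hmin⟩
  have hdvd : π ^ 12 * W'.Δ ∣ 1 * W'.Δ := by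
    rw [one_mul, ← Δ_scale, ← hW', variableChange_Δ, ← Units.val_pow_eq_pow_val,
      Units.mul_left_dvd]
    exact hmin W' hint
  exact hπ ((isUnit_pow_iff (by norm_num)).mp
    (isUnit_of_dvd_one ((mul_dvd_mul_iff_right (right_ne_zero_of_mul hCΔ)).mp hdvd)))

lemma _root_.ValuationRing.exists_algebraMap_eq_inv_or_mem_maximalIdeal [IsDomain A]
    [ValuationRing A] (u : Kˣ) : (∃ d : A, algebraMap A K d = ↑u⁻¹) ∨
      ∃ c ∈ IsLocalRing.maximalIdeal A, algebraMap A K c = u := by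
  rcases ValuationRing.isInteger_or_isInteger A (u : K) with ⟨c, hc⟩ | ⟨d, hd⟩
  · by_cases hcu : IsUnit c
    · refine Or.inl ⟨↑hcu.unit⁻¹, ?_⟩
      rw [map_units_inv, IsUnit.unit_spec, hc, Units.val_inv_eq_inv_val]
    · exact Or.inr ⟨c, (IsLocalRing.mem_maximalIdeal c).mpr hcu, hc⟩
  · exact Or.inl ⟨d, by rw [hd, Units.val_inv_eq_inv_val]⟩

lemma exists_algebraMap_eq_of_map_eq_smul [IsIntegrallyClosed A] {W W' : WeierstrassCurve A}
    {D : VariableChange K} (hD : W'.map (algebraMap A K) = D • W.map (algebraMap A K)) {c : A}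
    (hc : algebraMap A K c = D.u) :
    ∃ r s t : A, algebraMap A K r = D.r ∧ algebraMap A K s = D.s ∧ algebraMap A K t = D.t := by
  set φ := algebraMap A K
  have rel {n : ℕ} {x : A} {y : K} (h : φ x = ↑D.u⁻¹ ^ n * y) : φ (c ^ n * x) = y := by
    rw [map_mul, map_pow, hc, ← Units.eq_inv_pow_mul_iff]
    exact h
  have hb₆ : φ (c ^ 6 * W'.b₆) = φ W.b₆ + 2 * D.r * φ W.b₄ + D.r ^ 2 * φ W.b₂ + 4 * D.r ^ 3 := by
    have h := congrArg b₆ hD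
    rw [map_b₆, variableChange_b₆, map_b₆, map_b₄, map_b₂] at h
    exact rel h
  have hb₈ : φ (c ^ 8 * W'.b₈) = φ W.b₈ + 3 * D.r * φ W.b₆ + 3 * D.r ^ 2 * φ W.b₄
      + D.r ^ 3 * φ W.b₂ + 3 * D.r ^ 4 := by
    have h := congrArg b₈ hD
    rw [map_b₈, variableChange_b₈, map_b₈, map_b₆, map_b₄, map_b₂] at h
    exact rel h
  have ha₂ := rel (congrArg a₂ hD)
  have ha₆ := rel (congrArg a₆ hD)
  simp only [map_a₁, map_a₂, map_a₃, map_a₄, map_a₆] at ha₂ ha₆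
  -- The laws for `b₆` and `b₈` involve only `u` and `r`; eliminating `b₂` leaves a monic quartic
  -- in `r`. Once `r` is integral, those for `a₂` and `a₆` are monic quadratics in `s` and `t`.
  obtain ⟨r, hr⟩ := IsIntegrallyClosed.isIntegral_iff.mp <|
    isIntegral_of_pow_four_add_eq_zero (-W.b₄) (-(2 * W.b₆ + c ^ 6 * W'.b₆))
      (c ^ 8 * W'.b₈ - W.b₈) (x := D.r) (by
        simp only [map_neg, map_add, map_sub, map_mul, map_pow, map_ofNat] at hb₆ hb₈ ⊢
        linear_combination hb₈ - D.r * hb₆)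
  obtain ⟨s, hs⟩ := IsIntegrallyClosed.isIntegral_iff.mp <|
    isIntegral_of_sq_add_mul_add_eq_zero W.a₁ (c ^ 2 * W'.a₂ - W.a₂ - 3 * r) (x := D.s) (by
      simp only [map_sub, map_mul, map_pow, map_ofNat, hr] at ha₂ ⊢
      linear_combination ha₂)
  obtain ⟨t, ht⟩ := IsIntegrallyClosed.isIntegral_iff.mp <|
    isIntegral_of_sq_add_mul_add_eq_zero (W.a₃ + r * W.a₁)
      (c ^ 6 * W'.a₆ - W.a₆ - r * W.a₄ - r ^ 2 * W.a₂ - r ^ 3) (x := D.t) (by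
        simp only [map_add, map_sub, map_mul, map_pow, hr] at ha₆ ⊢
        linear_combination ha₆)
  exact ⟨r, s, t, hr, hs, ht⟩

lemma exists_smul_weightedDvd_of_not_isMinimalModel [IsDomain A] [IsDiscreteValuationRing A]
    {π : A} (hπ : Irreducible π) {W : WeierstrassCurve A}
    (h : ¬IsMinimalModel A K (W.map (algebraMap A K)) W) :
    ∃ C : VariableChange A, (C • W).WeightedDvd π := by
  set φ := algebraMap A K
  obtain ⟨W', ⟨D, hD⟩, hndvd⟩ : ∃ W', IsIntegralModel A K (W.map φ) W' ∧ ¬W.Δ ∣ W'.Δ := by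
    by_contra! h'
    exact h ⟨⟨1, (one_smul _ _).symm⟩, h'⟩
  have hΔ : φ W'.Δ = ↑D.u⁻¹ ^ 12 * φ W.Δ := by rw [← map_Δ, hD, variableChange_Δ, map_Δ]
  obtain ⟨c, hcπ, hc⟩ : ∃ c ∈ IsLocalRing.maximalIdeal A, φ c = D.u := by
    refine (ValuationRing.exists_algebraMap_eq_inv_or_mem_maximalIdeal K D.u).resolve_left ?_
    rintro ⟨d, hd⟩
    exact hndvd ⟨d ^ 12, IsFractionRing.injective A K (by rw [hΔ, map_mul, map_pow, hd, mul_comm])⟩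
  obtain ⟨r, s, t, hr, hs, ht⟩ := exists_algebraMap_eq_of_map_eq_smul K hD hc
  have hDfac : D = ⟨D.u, 0, 0, 0⟩ * (⟨1, r, s, t⟩ : VariableChange A).map φ := by
    ext <;> simp [VariableChange.mul_def, φ, hr, hs, ht]
  rw [hDfac, mul_smul, map_variableChange,
    map_eq_smul_map_iff_eq_scale (IsFractionRing.injective A K) _ _ hc] at hD
  rw [hπ.maximalIdeal_eq, Ideal.mem_span_singleton] at hcπ
  exact ⟨_, hD ▸ weightedDvd_scale hcπ W'⟩

theorem not_isMinimalModel_iff [IsDomain A] [IsDiscreteValuationRing A] {π : A}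
    (hπ : Irreducible π) {W : WeierstrassCurve A} (hΔ : W.Δ ≠ 0) :
    ¬IsMinimalModel A K (W.map (algebraMap A K)) W ↔
      ∃ C : VariableChange A, (C • W).WeightedDvd π :=
  ⟨exists_smul_weightedDvd_of_not_isMinimalModel K hπ,
    fun ⟨C, hC⟩ => not_isMinimalModel_of_weightedDvd K hπ.not_isUnit hΔ C hC⟩

end FractionRing

end WeierstrassCurve

theorem minimality_determined_mod_pi_six_general
    (A K : Type*) [CommRing A] [Field K]
    [IsDomain A] [IsDiscreteValuationRing A]
    [Algebra A K] [IsFractionRing A K]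
    (π : A) (hπ : Irreducible π)
    (W W₀ : WeierstrassCurve A)
    (hW : (W.map (algebraMap A K)).Δ ≠ 0)
    (hW₀ : (W₀.map (algebraMap A K)).Δ ≠ 0)
    (hcongr : ∃ C : VariableChange (A ⧸ Ideal.span {π ^ 6}),
      C • (W.map (Ideal.Quotient.mk (Ideal.span {π ^ 6}))) =
        W₀.map (Ideal.Quotient.mk (Ideal.span {π ^ 6}))) :
    IsMinimalModel A K (W.map (algebraMap A K)) W ↔
      IsMinimalModel A K (W₀.map (algebraMap A K)) W₀ := by
  have hΔ : W.Δ ≠ 0 := ne_zero_of_map (f := algebraMap A K) (by rwa [← map_Δ])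
  have hΔ₀ : W₀.Δ ≠ 0 := ne_zero_of_map (f := algebraMap A K) (by rwa [← map_Δ])
  have hI : Ideal.span {π ^ 6} ≠ ⊤ := by
    rw [Ne, Ideal.span_singleton_eq_top, isUnit_pow_iff (by norm_num)]
    exact hπ.not_isUnit
  obtain ⟨C, hC⟩ := hcongr
  obtain ⟨C, rfl⟩ := VariableChange.exists_map_mk_eq hI C
  rw [map_variableChange] at hC
  rw [← not_iff_not, not_isMinimalModel_iff K hπ hΔ, not_isMinimalModel_iff K hπ hΔ₀,
    ← exists_smul_weightedDvd_iff_of_map_eq hC, exists_smul_weightedDvd_smul_iff]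

/-- Suppose the discrete valuation ring `A = O_K` has perfect residue field.  Let
`W`, `W₀` be integral Weierstrass equations over `A` whose generic fibers are elliptic
curves over `K`.  Suppose there is a Weierstrass change of variables
`(u, r, s, t)` over `A/π⁶A` (`u` a unit, acting by `x = u²x' + r`,
`y = u³y' + u²sx' + t`) transforming the reduction of `W` modulo `π⁶` into the
reduction of `W₀` modulo `π⁶`.  Then `W` is a minimal integral Weierstrass equation of
its generic fiber if and only if `W₀` is. -/
theorem minimality_determined_mod_pi_six
    (A K : Type*) [CommRing A] [Field K]
    [IsDomain A] [IsDiscreteValuationRing A]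
    [PerfectField (IsLocalRing.ResidueField A)]
    [Algebra A K] [IsFractionRing A K]
    (π : A) (hπ : Irreducible π)
    (W W₀ : WeierstrassCurve A)
    (hW : (W.map (algebraMap A K)).Δ ≠ 0)
    (hW₀ : (W₀.map (algebraMap A K)).Δ ≠ 0)
    (hcongr : ∃ C : VariableChange (A ⧸ Ideal.span {π ^ 6}),
      C • (W.map (Ideal.Quotient.mk (Ideal.span {π ^ 6}))) =
        W₀.map (Ideal.Quotient.mk (Ideal.span {π ^ 6}))) :
    IsMinimalModel A K (W.map (algebraMap A K)) W ↔
      IsMinimalModel A K (W₀.map (algebraMap A K)) W₀ :=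
  minimality_determined_mod_pi_six_general A K π hπ W W₀ hW hW₀ hcongr
end

section
/- Let O_K be a discrete valuation ring with uniformizer π, let A be a Noetherian O_K-algebra, and let J ⊆ A be an ideal such that A/J is flat (equivalently, torsion-free) over O_K and every element of J is killed by a power of π (i.e. J ⊗_{O_K} K = 0). Then: (1) J equals the π-power-torsion ideal of A, and there exists c ≥ 0 with J = A[π^c] := {a ∈ A : π^c a = 0}; (2) for every N ≥ 0, the natural surjection A/π^{N+c+1}A → (A/J)/π^{N+1}(A/J) induces an isomorphism (A/π^{N+c+1}A)/((A/π^{N+c+1}A)[π^c]) ≅ (A/J)/π^{N+1}(A/J), where (A/π^{N+c+1}A)[π^c] denotes the ideal of elements killed by π^c. -/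
/-!
Flatness of `R ⧸ J` over the domain `A` means `R ⧸ J` is torsion-free, so every `π`-power-torsion
element of `R` lies in `J`; with the hypothesis this makes `J` the `π`-power-torsion ideal. In the
Noetherian ring `R` the kernels of `π ^ n` stabilise, so a single `π ^ c` kills `J`. Then
`J = Ann(π ^ c)`, and `r ≡ π ^ (N + 1) s` modulo `J` exactly when `π ^ c r = π ^ (N + c + 1) s`.
-/

theorem Ideal.mem_of_smul_mem_of_isTorsionFree {A R : Type*} [CommRing A] [IsDomain A]
    [CommRing R] [Algebra A R] {J : Ideal R} [Module.IsTorsionFree A (R ⧸ J)]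
    {a : A} (ha : a ≠ 0) {x : R} (h : a • x ∈ J) : x ∈ J := by
  rw [← Ideal.Quotient.eq_zero_iff_mem] at h ⊢
  rwa [Algebra.smul_def, map_mul, Ideal.Quotient.mk_algebraMap, ← Algebra.smul_def,
    smul_eq_zero_iff_right ha] at h

theorem IsNoetherian.exists_pow_smul_eq_zero_of_pow_smul_eq_zero {R M : Type*} [CommRing R]
    [AddCommGroup M] [Module R M] [IsNoetherian R M] (r : R) :
    ∃ c : ℕ, ∀ x : M, (∃ n : ℕ, r ^ n • x = 0) → r ^ c • x = 0 := by
  let f := Module.toModuleEnd R (S := R) M r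
  have hker (n : ℕ) (x : M) : x ∈ LinearMap.ker (f ^ n) ↔ r ^ n • x = 0 := by
    rw [← map_pow]; simp
  obtain ⟨c, hc⟩ := Filter.eventually_atTop.mp f.eventually_iSup_ker_pow_eq
  refine ⟨c, fun x ⟨n, hn⟩ => ?_⟩
  rw [← hker, ← hc c le_rfl]
  exact Submodule.mem_iSup_of_mem n ((hker n x).mpr hn)

theorem Ideal.Quotient.mk_mem_span_singleton_iff_of_forall_mem_iff {R : Type*} [CommRing R]
    {J : Ideal R} {u : R} (hJ : ∀ x, x ∈ J ↔ u * x = 0) (r v : R) :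
    Ideal.Quotient.mk J r ∈ Ideal.span {Ideal.Quotient.mk J v} ↔
      u * r ∈ Ideal.span {u * v} := by
  simp only [Ideal.mem_span_singleton']
  constructor
  · rintro ⟨t, ht⟩
    obtain ⟨s, rfl⟩ := Ideal.Quotient.mk_surjective t
    have hdiff : u * (r - s * v) = 0 := by
      rw [← hJ, ← Ideal.Quotient.eq]
      simpa using ht.symm
    exact ⟨s, by linear_combination -hdiff⟩
  · rintro ⟨s, hs⟩
    have hdiff : r - s * v ∈ J := (hJ _).mpr (by linear_combination -hs)
    refine ⟨Ideal.Quotient.mk J s, ?_⟩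
    rw [← map_mul, eq_comm, Ideal.Quotient.eq]
    exact hdiff

theorem Ideal.Quotient.mk_mem_span_pow_iff_pow_smul_mk_eq_zero {A R : Type*} [CommRing A]
    [CommRing R] [Algebra A R] {J : Ideal R} {π : A} {c : ℕ}
    (hJ : ∀ x : R, x ∈ J ↔ π ^ c • x = 0) (N : ℕ) (r : R) :
    Ideal.Quotient.mk J r ∈ Ideal.span {algebraMap A (R ⧸ J) π ^ (N + 1)} ↔
      π ^ c • Ideal.Quotient.mk (Ideal.span {algebraMap A R π ^ (N + c + 1)}) r = 0 := by
  have hJmul (x : R) : x ∈ J ↔ algebraMap A R (π ^ c) * x = 0 := by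
    rw [← Algebra.smul_def, hJ]
  have hsmul : π ^ c • Ideal.Quotient.mk (Ideal.span {algebraMap A R π ^ (N + c + 1)}) r =
      Ideal.Quotient.mk _ (algebraMap A R (π ^ c) * r) := by
    rw [Algebra.smul_def, map_mul, Ideal.Quotient.mk_algebraMap]
  have hgen : algebraMap A (R ⧸ J) π ^ (N + 1) =
      Ideal.Quotient.mk J (algebraMap A R (π ^ (N + 1))) := by
    rw [map_pow, map_pow, Ideal.Quotient.mk_algebraMap]
  have hpow : algebraMap A R π ^ (N + c + 1) =
      algebraMap A R (π ^ c) * algebraMap A R (π ^ (N + 1)) := by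
    simp only [map_pow]; ring
  rw [hsmul, hgen, hpow, Ideal.Quotient.eq_zero_iff_mem,
    Ideal.Quotient.mk_mem_span_singleton_iff_of_forall_mem_iff hJmul]

theorem torsion_ideal_deformation_general
    (A : Type*) [CommRing A] [IsDomain A]
    (π : A) (hπ : Irreducible π)
    (R : Type*) [CommRing R] [Algebra A R] [IsNoetherianRing R]
    (J : Ideal R)
    (hflat : Module.Flat A (R ⧸ J))
    (htors : ∀ x ∈ J, ∃ n : ℕ, π ^ n • x = 0) :
    (∀ x : R, x ∈ J ↔ ∃ n : ℕ, π ^ n • x = 0) ∧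
      ∃ c : ℕ, (∀ x : R, x ∈ J ↔ π ^ c • x = 0) ∧
        ∀ N : ℕ,
          ∀ Φ : (R ⧸ Ideal.span {algebraMap A R π ^ (N + c + 1)}) →+*
            ((R ⧸ J) ⧸ Ideal.span {algebraMap A (R ⧸ J) π ^ (N + 1)}),
          (∀ r : R, Φ (Ideal.Quotient.mk _ r) =
              Ideal.Quotient.mk _ (Ideal.Quotient.mk J r)) →
          Function.Surjective Φ ∧ ∀ x, Φ x = 0 ↔ π ^ c • x = 0 := by
  have hmem (x : R) (n : ℕ) (h : π ^ n • x = 0) : x ∈ J :=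
    Ideal.mem_of_smul_mem_of_isTorsionFree (pow_ne_zero n hπ.ne_zero) (h ▸ J.zero_mem)
  obtain ⟨c, hc⟩ := IsNoetherian.exists_pow_smul_eq_zero_of_pow_smul_eq_zero
    (M := R) (algebraMap A R π)
  simp only [← map_pow, algebraMap_smul] at hc
  have hJ (x : R) : x ∈ J ↔ π ^ c • x = 0 := ⟨fun hx => hc x (htors x hx), hmem x c⟩
  refine ⟨fun x => ⟨htors x, fun ⟨n, hn⟩ => hmem x n hn⟩, c, hJ, fun N Φ hΦ => ⟨?_, ?_⟩⟩
  · refine .of_comp (g := Ideal.Quotient.mk _) ?_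
    rw [show Φ ∘ _ = _ from funext hΦ]
    exact Ideal.Quotient.mk_surjective.comp Ideal.Quotient.mk_surjective
  · intro x
    obtain ⟨r, rfl⟩ := Ideal.Quotient.mk_surjective x
    rw [hΦ, Ideal.Quotient.eq_zero_iff_mem,
      Ideal.Quotient.mk_mem_span_pow_iff_pow_smul_mk_eq_zero hJ]

/-- Let `A = O_K` be a discrete valuation ring with uniformizer `π`, `R` a Noetherian
`A`-algebra, and `J ⊆ R` an ideal such that `R/J` is flat over `A` and every element
of `J` is killed by a power of `π`.  Then:
(1) `J` equals the `π`-power-torsion ideal of `R`, and there exists `c ≥ 0` with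
    `J = R[π^c] = { a ∈ R : π^c a = 0 }`;
(2) for every `N ≥ 0`, the natural surjection
    `R/π^{N+c+1}R → (R/J)/π^{N+1}(R/J)` induces an isomorphism
    `(R/π^{N+c+1}R)/((R/π^{N+c+1}R)[π^c]) ≅ (R/J)/π^{N+1}(R/J)`, i.e. the natural
    map is surjective with kernel the `π^c`-torsion ideal. -/
theorem torsion_ideal_deformation
    (A : Type*) [CommRing A] [IsDomain A] [IsDiscreteValuationRing A]
    (π : A) (hπ : Irreducible π)
    (R : Type*) [CommRing R] [Algebra A R] [IsNoetherianRing R]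
    (J : Ideal R)
    (hflat : Module.Flat A (R ⧸ J))
    (htors : ∀ x ∈ J, ∃ n : ℕ, π ^ n • x = 0) :
    (∀ x : R, x ∈ J ↔ ∃ n : ℕ, π ^ n • x = 0) ∧
      ∃ c : ℕ, (∀ x : R, x ∈ J ↔ π ^ c • x = 0) ∧
        ∀ N : ℕ,
          ∀ Φ : (R ⧸ Ideal.span {algebraMap A R π ^ (N + c + 1)}) →+*
            ((R ⧸ J) ⧸ Ideal.span {algebraMap A (R ⧸ J) π ^ (N + 1)}),
          (∀ r : R, Φ (Ideal.Quotient.mk _ r) =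
              Ideal.Quotient.mk _ (Ideal.Quotient.mk J r)) →
          Function.Surjective Φ ∧ ∀ x, Φ x = 0 ↔ π ^ c • x = 0 :=
  torsion_ideal_deformation_general A π hπ R J hflat htors
end
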